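/- arXiv:1508.07771 — 9 statements merged into one kernel-verified Lean document; each statement's English description precedes it below -/
import Mathlib

section
/- Let E be a finite ground set, f : 2^E → ℝ a non-negative submodular function with multilinear extension F, a ∈ [0,1], and y ∈ [0,1]^E with y_e ≤ a for every e ∈ E. Let x ∈ [0,1]^E and let α : 2^E → ℝ_{≥0} satisfy Σ_{A⊆E} α_A = 1 and Σ_{A : j∈A} α_A = x_j for every j ∈ E. Then Σ_{e∈E} x_e · (F(y ∨ χ_{{e}}) − F(y)) ≥ (1 − a) · Σ_{A⊆E} α_A f(A) − F(y), where ∨ denotes coordinate-wise maximum and χ_S the characteristic vector of S. -/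
open Finset

/-- The multilinear extension `F` of a set function `f : 2^E → ℝ`. -/
noncomputable def multilinearExt {E : Type*} [Fintype E] [DecidableEq E]
    (f : Finset E → ℝ) (y : E → ℝ) : ℝ :=
  ∑ A : Finset E, f A * (∏ e ∈ A, y e) * ∏ e ∈ Aᶜ, (1 - y e)

section Aux
open MeasureTheory

variable {E : Type*} [Fintype E] [DecidableEq E]


/-- threshold set -/
noncomputable def thr (y : E → ℝ) (θ : ℝ) : Finset E := univ.filter (fun e => θ < y e)

lemma measurableSet_thr_eq (y : E → ℝ) (S : Finset E) :
    MeasurableSet {θ : ℝ | thr y θ = S} := by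
  have hset : {θ : ℝ | thr y θ = S} = ⋂ e : E, {θ : ℝ | e ∈ S ↔ θ < y e} := by
    ext θ
    simp only [Set.mem_iInter, Set.mem_setOf_eq, thr, Finset.ext_iff, Finset.mem_filter,
      Finset.mem_univ, true_and]
    exact ⟨fun h e => (h e).symm, fun h e => (h e).symm⟩
  rw [hset]
  refine MeasurableSet.iInter fun e => ?_
  by_cases he : e ∈ S
  · simp only [he, true_iff]
    exact measurableSet_Iio
  · simp only [he, false_iff, not_lt]
    exact measurableSet_Ici

lemma intervalIntegrable_thr (h : Finset E → ℝ) (y : E → ℝ) (u v : ℝ) :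
    IntervalIntegrable (fun θ => h (thr y θ)) volume u v := by
  have hfin : volume (Set.uIoc u v) < ⊤ := by rw [Set.uIoc]; exact measure_Ioc_lt_top
  have hfun : (fun θ => h (thr y θ)) =
      fun θ => ∑ S : Finset E, ({θ : ℝ | thr y θ = S}).indicator (fun _ => h S) θ := by
    funext θ
    rw [Finset.sum_eq_single (thr y θ)]
    · simp [Set.indicator_apply]
    · intro S _ hne
      simp [Set.indicator_apply, fun hh : thr y θ = S => hne hh.symm]
      intro hh; exact absurd hh (fun hh => hne hh.symm)
    · simp
  rw [hfun, intervalIntegrable_iff]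
  exact integrable_finset_sum _ fun S _ =>
    ((integrableOn_const_iff (C := h S)).mpr (Or.inr hfin)).indicator (measurableSet_thr_eq y S)

/-- Lovász-style lower bound quantity -/
noncomputable def lov (h : Finset E → ℝ) (y : E → ℝ) : ℝ := ∫ θ in (0:ℝ)..1, h (thr y θ)

lemma lov_ge (h : Finset E → ℝ) (hh : ∀ S, 0 ≤ h S) (a : ℝ) (ha : a ∈ Set.Icc (0:ℝ) 1)
    (y : E → ℝ) (hya : ∀ e, y e ≤ a) :
    (1 - a) * h ∅ ≤ lov h y := by
  have hsplit : lov h y = (∫ θ in (0:ℝ)..a, h (thr y θ)) + ∫ θ in a..(1:ℝ), h (thr y θ) :=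
    (intervalIntegral.integral_add_adjacent_intervals
      (intervalIntegrable_thr h y 0 a) (intervalIntegrable_thr h y a 1)).symm
  have h1 : 0 ≤ ∫ θ in (0:ℝ)..a, h (thr y θ) :=
    intervalIntegral.integral_nonneg ha.1 fun θ _ => hh _
  have h2 : (∫ θ in a..(1:ℝ), h (thr y θ)) = (1 - a) * h ∅ := by
    have hcongr : ∀ᵐ θ ∂(volume : Measure ℝ), θ ∈ Set.uIoc a 1 → h (thr y θ) = h ∅ := by
      refine Filter.Eventually.of_forall fun θ hθ => ?_
      rw [Set.uIoc_of_le ha.2] at hθ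
      have : thr y θ = ∅ := by
        apply Finset.eq_empty_of_forall_notMem
        intro e he
        have := (Finset.mem_filter.mp he).2
        have := hya e
        have := hθ.1
        linarith
      rw [this]
    rw [intervalIntegral.integral_congr_ae hcongr, intervalIntegral.integral_const,
      smul_eq_mul]
  rw [hsplit, h2]
  linarith

lemma ae_ne_real (c : ℝ) : ∀ᵐ θ ∂(volume : Measure ℝ), θ ≠ c := by
  simpa using measure_eq_zero_iff_ae_notMem.mp (Real.volume_singleton (a := c))

lemma lov_boolean (h : Finset E → ℝ) {y : E → ℝ} (hb : ∀ e, y e = 0 ∨ y e = 1) :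
    lov h y = h (univ.filter fun e => y e = 1) := by
  have hcongr : ∀ᵐ θ ∂(volume : Measure ℝ), θ ∈ Set.uIoc 0 1 →
      h (thr y θ) = h (univ.filter fun e => y e = 1) := by
    filter_upwards [ae_ne_real 1] with θ h1 hθ
    rw [Set.uIoc_of_le (by norm_num : (0:ℝ) ≤ 1)] at hθ
    have hlt : θ < 1 := lt_of_le_of_ne hθ.2 h1
    congr 1
    ext e
    simp only [thr, mem_filter, mem_univ, true_and]
    rcases hb e with h0 | h0 <;> rw [h0]
    · exact iff_of_false (by linarith [hθ.1]) (by norm_num)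
    · exact iff_of_true hlt rfl
  unfold lov
  rw [intervalIntegral.integral_congr_ae hcongr, intervalIntegral.integral_const, smul_eq_mul]
  ring

lemma submod_marginal {h : Finset E → ℝ}
    (hsub : ∀ S T, h (S ∪ T) + h (S ∩ T) ≤ h S + h T)
    {A B : Finset E} (hBA : B ⊆ A) {e : E} (he : e ∉ A) :
    h (insert e A) - h A ≤ h (insert e B) - h B := by
  have hkey := hsub A (insert e B)
  have h1 : A ∪ insert e B = insert e A := by
    ext x
    simp only [Finset.mem_union, Finset.mem_insert]
    constructor
    · rintro (hx | rfl | hx)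
      · exact Or.inr hx
      · exact Or.inl rfl
      · exact Or.inr (hBA hx)
    · rintro (rfl | hx)
      · exact Or.inr (Or.inl rfl)
      · exact Or.inl hx
  have h2 : A ∩ insert e B = B := by
    ext x
    simp only [Finset.mem_inter, Finset.mem_insert]
    constructor
    · rintro ⟨hxA, rfl | hxB⟩
      · exact absurd hxA he
      · exact hxB
    · exact fun hx => ⟨hBA hx, Or.inr hx⟩
  rw [h1, h2] at hkey
  linarith

lemma lov_step (h : Finset E → ℝ)
    (hsub : ∀ S T, h (S ∪ T) + h (S ∩ T) ≤ h S + h T)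
    (y : E → ℝ) (hy : ∀ e, y e ∈ Set.Icc (0:ℝ) 1) (e : E) :
    lov h y ≤ (1 - y e) * lov h (Function.update y e 0)
      + y e * lov h (Function.update y e 1) := by
  set b := y e with hbdef
  have hb0 : 0 ≤ b := (hy e).1
  have hb1 : b ≤ 1 := (hy e).2
  set y₀ := Function.update y e 0 with hy0def
  set y₁ := Function.update y e 1 with hy1def
  -- threshold facts
  have A1 : ∀ θ : ℝ, b < θ → thr y θ = thr y₀ θ := by
    intro θ hθ
    ext x
    simp only [thr, mem_filter, mem_univ, true_and]
    by_cases hx : x = e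
    · subst hx
      rw [hy0def, Function.update_self]
      exact iff_of_false (by linarith) (by linarith)
    · rw [hy0def, Function.update_of_ne hx]
  have A2 : ∀ θ : ℝ, 0 < θ → θ < b → thr y θ = thr y₁ θ := by
    intro θ hθ0 hθb
    ext x
    simp only [thr, mem_filter, mem_univ, true_and]
    by_cases hx : x = e
    · subst hx
      rw [hy1def, Function.update_self]
      exact iff_of_true hθb (by linarith)
    · rw [hy1def, Function.update_of_ne hx]
  have A3 : ∀ θ : ℝ, θ < 1 → thr y₁ θ = insert e (thr y₀ θ) := by
    intro θ hθ1
    ext x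
    simp only [thr, mem_filter, mem_univ, true_and, Finset.mem_insert]
    by_cases hx : x = e
    · subst hx
      rw [hy1def, Function.update_self]
      exact iff_of_true hθ1 (Or.inl rfl)
    · rw [hy1def, Function.update_of_ne hx]
      constructor
      · intro hlt
        refine Or.inr ?_
        simp only [thr, mem_filter, mem_univ, true_and, hy0def, Function.update_of_ne hx]
        exact hlt
      · rintro (rfl | hmem)
        · exact absurd rfl hx
        · simpa only [thr, mem_filter, mem_univ, true_and, hy0def,
            Function.update_of_ne hx] using hmem
  have A4 : ∀ θ₁ θ₂ : ℝ, θ₁ ≤ θ₂ → thr y₀ θ₂ ⊆ thr y₀ θ₁ := by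
    intro θ₁ θ₂ hle x hx
    simp only [thr, mem_filter, mem_univ, true_and] at hx ⊢
    linarith
  have A5 : ∀ θ : ℝ, 0 ≤ θ → e ∉ thr y₀ θ := by
    intro θ hθ hmem
    simp only [thr, mem_filter, mem_univ, true_and, hy0def, Function.update_self] at hmem
    linarith
  -- integrals
  have ii : ∀ (z : E → ℝ) (u v : ℝ),
      IntervalIntegrable (fun θ => h (thr z θ)) volume u v := intervalIntegrable_thr h
  have split : ∀ z : E → ℝ, lov h z =
      (∫ θ in (0:ℝ)..b, h (thr z θ)) + ∫ θ in b..(1:ℝ), h (thr z θ) := fun z =>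
    (intervalIntegral.integral_add_adjacent_intervals (ii z 0 b) (ii z b 1)).symm
  have e1 : (∫ θ in (0:ℝ)..b, h (thr y θ)) = ∫ θ in (0:ℝ)..b, h (thr y₁ θ) := by
    apply intervalIntegral.integral_congr_ae
    filter_upwards [ae_ne_real b] with θ hneb hθ
    rw [Set.uIoc_of_le hb0] at hθ
    rw [A2 θ hθ.1 (lt_of_le_of_ne hθ.2 hneb)]
  have e2 : (∫ θ in b..(1:ℝ), h (thr y θ)) = ∫ θ in b..(1:ℝ), h (thr y₀ θ) := by
    apply intervalIntegral.integral_congr_ae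
    refine Filter.Eventually.of_forall fun θ hθ => ?_
    rw [Set.uIoc_of_le hb1] at hθ
    rw [A1 θ hθ.1]
  set c := h (insert e (thr y₀ b)) - h (thr y₀ b) with hcdef
  have claimA : (∫ θ in (0:ℝ)..b, h (thr y₁ θ)) - (∫ θ in (0:ℝ)..b, h (thr y₀ θ)) ≤ b * c := by
    rw [← intervalIntegral.integral_sub (ii y₁ 0 b) (ii y₀ 0 b)]
    have hmono : (∫ θ in (0:ℝ)..b, (h (thr y₁ θ) - h (thr y₀ θ))) ≤ ∫ _ in (0:ℝ)..b, c := by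
      apply intervalIntegral.integral_mono_ae_restrict hb0
        ((ii y₁ 0 b).sub (ii y₀ 0 b)) intervalIntegrable_const
      filter_upwards [ae_restrict_mem measurableSet_Icc, ae_restrict_of_ae (ae_ne_real 0),
        ae_restrict_of_ae (ae_ne_real 1)] with θ hmem hne0 hne1
      have hθ0 : 0 < θ := lt_of_le_of_ne hmem.1 (Ne.symm hne0)
      have hθ1 : θ < 1 := lt_of_le_of_ne (le_trans hmem.2 hb1) hne1
      rw [A3 θ hθ1]
      exact submod_marginal hsub (A4 θ b hmem.2) (A5 θ (le_of_lt hθ0))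
    rwa [intervalIntegral.integral_const, smul_eq_mul, sub_zero] at hmono
  have claimB : (1 - b) * c ≤
      (∫ θ in b..(1:ℝ), h (thr y₁ θ)) - ∫ θ in b..(1:ℝ), h (thr y₀ θ) := by
    rw [← intervalIntegral.integral_sub (ii y₁ b 1) (ii y₀ b 1)]
    have hmono : (∫ _ in b..(1:ℝ), c) ≤ ∫ θ in b..(1:ℝ), (h (thr y₁ θ) - h (thr y₀ θ)) := by
      apply intervalIntegral.integral_mono_ae_restrict hb1 intervalIntegrable_const
        ((ii y₁ b 1).sub (ii y₀ b 1))
      filter_upwards [ae_restrict_mem measurableSet_Icc, ae_restrict_of_ae (ae_ne_real 1)]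
        with θ hmem hne1
      have hθ1 : θ < 1 := lt_of_le_of_ne hmem.2 hne1
      rw [A3 θ hθ1]
      exact submod_marginal hsub (A4 b θ hmem.1) (A5 b hb0)
    rwa [intervalIntegral.integral_const, smul_eq_mul] at hmono
  have key : (1 - b) * ((∫ θ in (0:ℝ)..b, h (thr y₁ θ)) - ∫ θ in (0:ℝ)..b, h (thr y₀ θ)) ≤
      b * ((∫ θ in b..(1:ℝ), h (thr y₁ θ)) - ∫ θ in b..(1:ℝ), h (thr y₀ θ)) := by
    have t1 := mul_le_mul_of_nonneg_left claimA (by linarith : (0:ℝ) ≤ 1 - b)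
    have t2 := mul_le_mul_of_nonneg_left claimB hb0
    nlinarith
  rw [split y, split y₀, split y₁, e1, e2]
  nlinarith [key]


noncomputable def wgt (y : E → ℝ) (S : Finset E) : ℝ :=
  (∏ e ∈ S, y e) * ∏ e ∈ Sᶜ, (1 - y e)

lemma wgt_update (y : E → ℝ) (e : E) (S : Finset E) :
    wgt y S = (1 - y e) * wgt (Function.update y e 0) S
      + y e * wgt (Function.update y e 1) S := by
  unfold wgt
  by_cases h : e ∈ S
  · have hc : e ∉ Sᶜ := by simp [h]
    have h1 : ∀ c : ℝ, ∏ x ∈ Sᶜ, (1 - Function.update y e c x) = ∏ x ∈ Sᶜ, (1 - y x) := by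
      intro c
      refine Finset.prod_congr rfl fun x hx => ?_
      rw [Function.update_of_ne (by rintro rfl; exact hc hx)]
    have h2 : ∏ x ∈ S, Function.update y e (0:ℝ) x = 0 * ∏ x ∈ S.erase e, y x := by
      rw [Finset.prod_update_of_mem h, Finset.erase_eq]
    have h3 : ∏ x ∈ S, Function.update y e (1:ℝ) x = 1 * ∏ x ∈ S.erase e, y x := by
      rw [Finset.prod_update_of_mem h, Finset.erase_eq]
    have h4 : ∏ x ∈ S, y x = y e * ∏ x ∈ S.erase e, y x :=
      (Finset.mul_prod_erase S y h).symm
    rw [h1, h1, h2, h3, h4]; ring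
  · have hc : e ∈ Sᶜ := by simp [h]
    have h1 : ∀ c : ℝ, ∏ x ∈ S, Function.update y e c x = ∏ x ∈ S, y x := by
      intro c
      refine Finset.prod_congr rfl fun x hx => ?_
      rw [Function.update_of_ne (by rintro rfl; exact h hx)]
    have h2 : ∀ c : ℝ, ∏ x ∈ Sᶜ, (1 - Function.update y e c x)
        = (1 - c) * ∏ x ∈ Sᶜ.erase e, (1 - y x) := by
      intro c
      rw [← Finset.mul_prod_erase Sᶜ _ hc, Function.update_self]
      congr 1
      refine Finset.prod_congr rfl fun x hx => ?_
      rw [Function.update_of_ne (Finset.ne_of_mem_erase hx)]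
    have h4 : ∏ x ∈ Sᶜ, (1 - y x) = (1 - y e) * ∏ x ∈ Sᶜ.erase e, (1 - y x) :=
      (Finset.mul_prod_erase Sᶜ _ hc).symm
    rw [h1, h1, h2, h2, h4]; ring

lemma wgt_boolean {y : E → ℝ} (hb : ∀ e, y e = 0 ∨ y e = 1) (S : Finset E) :
    wgt y S = if S = univ.filter (fun e => y e = 1) then 1 else 0 := by
  split_ifs with h
  · subst h
    unfold wgt
    rw [Finset.prod_eq_one (fun e he => by simpa using (Finset.mem_filter.mp he).2),
        Finset.prod_eq_one, one_mul]
    intro e he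
    rcases hb e with h0 | h1
    · rw [h0]; ring
    · exfalso; simp [h1] at he
  · -- S differs from support; some factor vanishes
    unfold wgt
    by_cases hall : ∀ e ∈ S, y e = 1
    · have hsub : S ⊆ univ.filter (fun e => y e = 1) := fun e he =>
        Finset.mem_filter.mpr ⟨Finset.mem_univ e, hall e he⟩
      obtain ⟨e, heF, heS⟩ := Finset.exists_of_ssubset (Finset.ssubset_iff_subset_ne.mpr ⟨hsub, h⟩)
      have h1 : y e = 1 := (Finset.mem_filter.mp heF).2
      rw [Finset.prod_eq_zero (Finset.mem_compl.mpr heS) (by rw [h1]; ring)]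
      ring
    · push_neg at hall
      obtain ⟨e, heS, hne⟩ := hall
      have h0 : y e = 0 := (hb e).resolve_right hne
      rw [Finset.prod_eq_zero heS h0]
      ring

lemma wgt_nonneg {y : E → ℝ} (hy : ∀ e, y e ∈ Set.Icc (0:ℝ) 1) (S : Finset E) :
    0 ≤ wgt y S := by
  apply mul_nonneg
  · exact Finset.prod_nonneg fun e _ => (hy e).1
  · exact Finset.prod_nonneg fun e _ => by linarith [(hy e).2]

/-- expectation of h under the product distribution -/
noncomputable def phi (h : Finset E → ℝ) (y : E → ℝ) : ℝ := ∑ S : Finset E, wgt y S * h S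

lemma phi_update (h : Finset E → ℝ) (y : E → ℝ) (e : E) :
    phi h y = (1 - y e) * phi h (Function.update y e 0)
      + y e * phi h (Function.update y e 1) := by
  unfold phi
  rw [Finset.mul_sum, Finset.mul_sum, ← Finset.sum_add_distrib]
  refine Finset.sum_congr rfl fun S _ => ?_
  rw [wgt_update y e S]; ring

lemma phi_boolean (h : Finset E → ℝ) {y : E → ℝ} (hb : ∀ e, y e = 0 ∨ y e = 1) :
    phi h y = h (univ.filter fun e => y e = 1) := by
  unfold phi
  rw [Finset.sum_eq_single (univ.filter fun e => y e = 1)]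
  · rw [wgt_boolean hb, if_pos rfl, one_mul]
  · intro S _ hne
    rw [wgt_boolean hb, if_neg hne, zero_mul]
  · simp

lemma lov_le_phi (h : Finset E → ℝ)
    (hsub : ∀ S T, h (S ∪ T) + h (S ∩ T) ≤ h S + h T) :
    ∀ (n : ℕ) (y : E → ℝ), (∀ e, y e ∈ Set.Icc (0:ℝ) 1) →
      (univ.filter fun e => y e ≠ 0 ∧ y e ≠ 1).card ≤ n → lov h y ≤ phi h y := by
  intro n
  induction n with
  | zero =>
    intro y hy hcard
    have hb : ∀ e, y e = 0 ∨ y e = 1 := by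
      intro e
      by_contra hc
      push_neg at hc
      have : e ∈ univ.filter fun e => y e ≠ 0 ∧ y e ≠ 1 := by
        simp [hc.1, hc.2]
      have := Finset.card_pos.mpr ⟨e, this⟩
      omega
    rw [lov_boolean h hb, phi_boolean h hb]
  | succ n ih =>
    intro y hy hcard
    by_cases hb : ∀ e, y e = 0 ∨ y e = 1
    · rw [lov_boolean h hb, phi_boolean h hb]
    · push_neg at hb
      obtain ⟨e, he0, he1⟩ := hb
      have hemem : e ∈ univ.filter fun e => y e ≠ 0 ∧ y e ≠ 1 := by simp [he0, he1]
      have hupd : ∀ c : ℝ, (c = 0 ∨ c = 1) →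
          (univ.filter fun x => Function.update y e c x ≠ 0 ∧ Function.update y e c x ≠ 1)
            = (univ.filter fun x => y x ≠ 0 ∧ y x ≠ 1).erase e := by
        intro c hc
        ext x
        simp only [Finset.mem_filter, Finset.mem_univ, true_and, Finset.mem_erase]
        by_cases hx : x = e
        · subst hx
          rw [Function.update_self]
          constructor
          · rintro ⟨hc0, hc1⟩
            rcases hc with rfl | rfl
            · exact absurd rfl hc0
            · exact absurd rfl hc1
          · rintro ⟨hfalse, -⟩
            exact absurd rfl hfalse
        · rw [Function.update_of_ne hx]
          tauto
      have hcard' : ∀ c : ℝ, (c = 0 ∨ c = 1) →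
          (univ.filter fun x => Function.update y e c x ≠ 0 ∧ Function.update y e c x ≠ 1).card ≤ n := by
        intro c hc
        rw [hupd c hc]
        have := Finset.card_erase_of_mem hemem
        omega
      have hy' : ∀ c : ℝ, c ∈ Set.Icc (0:ℝ) 1 → ∀ x, Function.update y e c x ∈ Set.Icc (0:ℝ) 1 := by
        intro c hc x
        by_cases hx : x = e
        · subst hx; rw [Function.update_self]; exact hc
        · rw [Function.update_of_ne hx]; exact hy x
      have ih0 := ih _ (hy' 0 (by norm_num)) (hcard' 0 (Or.inl rfl))
      have ih1 := ih _ (hy' 1 (by norm_num)) (hcard' 1 (Or.inr rfl))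
      have hstep := lov_step h hsub y hy e
      have hb0 : 0 ≤ y e := (hy e).1
      have hb1 : y e ≤ 1 := (hy e).2
      rw [phi_update h y e]
      nlinarith [ih0, ih1, hstep]

lemma phi_ge (h : Finset E → ℝ) (hh : ∀ S, 0 ≤ h S)
    (hsub : ∀ S T, h (S ∪ T) + h (S ∩ T) ≤ h S + h T)
    (a : ℝ) (ha : a ∈ Set.Icc (0:ℝ) 1) (y : E → ℝ)
    (hy : ∀ e, y e ∈ Set.Icc (0:ℝ) 1) (hya : ∀ e, y e ≤ a) :
    (1 - a) * h ∅ ≤ phi h y :=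
  le_trans (lov_ge h hh a ha y hya)
    (lov_le_phi h hsub (univ.filter fun e => y e ≠ 0 ∧ y e ≠ 1).card y hy le_rfl)

lemma wgt_update_one_of_mem (y : E → ℝ) {e : E} {T : Finset E} (he : e ∈ T) :
    wgt (Function.update y e 1) T = wgt y T + wgt y (T.erase e) := by
  unfold wgt
  have h1 : ∏ x ∈ T, Function.update y e (1:ℝ) x = 1 * ∏ x ∈ T \ {e}, y x := by
    rw [Finset.prod_update_of_mem he]
  have h2 : ∏ x ∈ Tᶜ, (1 - Function.update y e (1:ℝ) x) = ∏ x ∈ Tᶜ, (1 - y x) := by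
    refine Finset.prod_congr rfl fun x hx => ?_
    rw [Function.update_of_ne (by rintro rfl; exact (Finset.mem_compl.mp hx) he)]
  have h3 : ∏ x ∈ T, y x = y e * ∏ x ∈ T \ {e}, y x := by
    rw [← Finset.erase_eq, ← Finset.mul_prod_erase T y he]
  have h4 : (T.erase e)ᶜ = insert e Tᶜ := by
    ext x; simp [Finset.mem_erase]
  have h5 : ∏ x ∈ T.erase e, y x = ∏ x ∈ T \ {e}, y x := by rw [Finset.erase_eq]
  have h6 : ∏ x ∈ (T.erase e)ᶜ, (1 - y x) = (1 - y e) * ∏ x ∈ Tᶜ, (1 - y x) := by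
    rw [h4, Finset.prod_insert (fun hc => (Finset.mem_compl.mp hc) he)]
  rw [h1, h2, h3, h5, h6]; ring

lemma wgt_update_one_of_not_mem (y : E → ℝ) {e : E} {T : Finset E} (he : e ∉ T) :
    wgt (Function.update y e 1) T = 0 := by
  unfold wgt
  rw [Finset.prod_eq_zero (Finset.mem_compl.mpr he)
    (by rw [Function.update_self]; ring)]
  ring

lemma phi_union (f : Finset E → ℝ) (y : E → ℝ) (e : E) :
    phi f (Function.update y e 1) = phi (fun S => f (S ∪ {e})) y := by
  unfold phi
  rw [← Finset.sum_filter_add_sum_filter_not univ (fun S : Finset E => e ∈ S)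
    (fun S => wgt (Function.update y e 1) S * f S),
      ← Finset.sum_filter_add_sum_filter_not univ (fun S : Finset E => e ∈ S)
    (fun S => wgt y S * f (S ∪ {e}))]
  have hz : ∑ S ∈ univ.filter (fun S : Finset E => ¬ e ∈ S),
      wgt (Function.update y e 1) S * f S = 0 := by
    apply Finset.sum_eq_zero
    intro S hS
    rw [wgt_update_one_of_not_mem y (Finset.mem_filter.mp hS).2, zero_mul]
  have hre : ∑ S ∈ univ.filter (fun S : Finset E => ¬ e ∈ S), wgt y S * f (S ∪ {e})
      = ∑ T ∈ univ.filter (fun T : Finset E => e ∈ T), wgt y (T.erase e) * f T := by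
    refine Finset.sum_nbij' (fun S => insert e S) (fun T => T.erase e) ?_ ?_ ?_ ?_ ?_
    · intro S hS; simp at hS ⊢
    · intro T hT; simp at hT ⊢
    · intro S hS; simp at hS; exact Finset.erase_insert hS
    · intro T hT; simp at hT; exact Finset.insert_erase hT
    · intro S hS
      simp only [Finset.mem_filter] at hS
      rw [Finset.erase_insert hS.2, Finset.union_comm, ← Finset.insert_eq]
  rw [hz, hre, add_zero, ← Finset.sum_add_distrib]
  refine Finset.sum_congr rfl fun T hT => ?_
  have heT : e ∈ T := (Finset.mem_filter.mp hT).2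
  rw [wgt_update_one_of_mem y heT,
      show T ∪ {e} = T from by simp [Finset.union_eq_left, heT]]
  ring

lemma submod_sum_marginals {g : Finset E → ℝ}
    (hsub : ∀ S T, g (S ∪ T) + g (S ∩ T) ≤ g S + g T) (A : Finset E) :
    g A - g ∅ ≤ ∑ e ∈ A, (g {e} - g ∅) := by
  induction A using Finset.induction with
  | empty => simp
  | @insert a s ha ih =>
    have hkey := hsub s {a}
    have h1 : s ∪ {a} = insert a s := by
      rw [Finset.union_comm, ← Finset.insert_eq]
    have h2 : s ∩ {a} = ∅ := by
      ext x; simp only [Finset.mem_inter, Finset.mem_singleton, Finset.notMem_empty,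
        iff_false, not_and]
      rintro hx rfl; exact ha hx
    rw [h1, h2] at hkey
    rw [Finset.sum_insert ha]
    linarith

lemma multilinearExt_eq_phi (f : Finset E → ℝ) (y : E → ℝ) :
    multilinearExt f y = phi f y :=
  Finset.sum_congr rfl fun S _ => by unfold wgt; ring

theorem measured_greedy_gain_bound_aux (f : Finset E → ℝ)
    (hf_nonneg : ∀ A : Finset E, 0 ≤ f A)
    (hf_submodular : ∀ S T : Finset E, f (S ∪ T) + f (S ∩ T) ≤ f S + f T)
    (a : ℝ) (ha : a ∈ Set.Icc (0 : ℝ) 1)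
    (y : E → ℝ) (hy : ∀ e, y e ∈ Set.Icc (0 : ℝ) 1) (hya : ∀ e, y e ≤ a)
    (x : E → ℝ) (hx : ∀ e, x e ∈ Set.Icc (0 : ℝ) 1)
    (α : Finset E → ℝ) (hα_nonneg : ∀ A : Finset E, 0 ≤ α A)
    (hα_sum : ∑ A : Finset E, α A = 1)
    (hα_marg : ∀ j : E,
      ∑ A ∈ Finset.univ.filter (fun A : Finset E => j ∈ A), α A = x j) :
    (1 - a) * (∑ A : Finset E, α A * f A) - multilinearExt f y ≤
      ∑ e : E, x e *
        (multilinearExt f (fun e' => max (y e') (if e' = e then 1 else 0)) -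
          multilinearExt f y) := by
  classical
  set G : Finset E → ℝ := fun A => phi (fun S => f (S ∪ A)) y with hGdef
  have hGsub : ∀ A B : Finset E, G (A ∪ B) + G (A ∩ B) ≤ G A + G B := by
    intro A B
    simp only [hGdef]
    unfold phi
    rw [← Finset.sum_add_distrib, ← Finset.sum_add_distrib]
    refine Finset.sum_le_sum fun S _ => ?_
    have h1 : S ∪ (A ∪ B) = (S ∪ A) ∪ (S ∪ B) := by ext x'; simp; tauto
    have h2 : S ∪ (A ∩ B) = (S ∪ A) ∩ (S ∪ B) := by ext x'; simp; tauto
    have hw := wgt_nonneg hy S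
    have hkey := mul_le_mul_of_nonneg_left (hf_submodular (S ∪ A) (S ∪ B)) hw
    simp only []
    rw [h1, h2]
    nlinarith [hkey]
  have hGa : ∀ A : Finset E, (1 - a) * f A ≤ G A := by
    intro A
    have hs : ∀ S T : Finset E,
        f ((S ∪ T) ∪ A) + f ((S ∩ T) ∪ A) ≤ f (S ∪ A) + f (T ∪ A) := by
      intro S T
      have h1 : (S ∪ A) ∪ (T ∪ A) = (S ∪ T) ∪ A := by ext x'; simp; tauto
      have h2 : (S ∪ A) ∩ (T ∪ A) = (S ∩ T) ∪ A := by ext x'; simp; tauto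
      have := hf_submodular (S ∪ A) (T ∪ A)
      rw [h1, h2] at this
      linarith
    have := phi_ge (fun S => f (S ∪ A)) (fun S => hf_nonneg _) hs a ha y hy hya
    simpa using this
  have hGm : ∀ A : Finset E, G A - G ∅ ≤ ∑ e ∈ A, (G {e} - G ∅) :=
    fun A => submod_sum_marginals hGsub A
  have hG0 : G ∅ = multilinearExt f y := by
    simp only [hGdef]
    unfold phi wgt multilinearExt
    refine Finset.sum_congr rfl fun S _ => ?_
    simp only [Finset.union_empty]; ring
  have hFy1 : ∀ e : E, (fun e' => max (y e') (if e' = e then 1 else 0)) =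
      Function.update y e 1 := by
    intro e; funext e'
    by_cases h : e' = e
    · subst h
      simp [Function.update_self, max_eq_right (hy e').2]
    · simp [h, Function.update_of_ne h, max_eq_left (hy e').1]
  have hNe : ∀ e : E,
      multilinearExt f (fun e' => max (y e') (if e' = e then 1 else 0)) = G {e} := by
    intro e
    rw [hFy1 e, multilinearExt_eq_phi, phi_union]
  have hrhs : ∑ e : E, x e *
        (multilinearExt f (fun e' => max (y e') (if e' = e then 1 else 0)) -
          multilinearExt f y)
      = ∑ A : Finset E, α A * ∑ e ∈ A, (G {e} - G ∅) := by
    calc ∑ e : E, x e *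
          (multilinearExt f (fun e' => max (y e') (if e' = e then 1 else 0)) -
            multilinearExt f y)
        = ∑ e : E, ∑ A ∈ univ.filter (fun A : Finset E => e ∈ A),
            α A * (G {e} - G ∅) := by
          refine Finset.sum_congr rfl fun e _ => ?_
          rw [hNe e, ← hG0, ← hα_marg e, Finset.sum_mul]
      _ = ∑ e : E, ∑ A : Finset E, (if e ∈ A then α A * (G {e} - G ∅) else 0) := by
          exact Finset.sum_congr rfl fun e _ => Finset.sum_filter _ _
      _ = ∑ A : Finset E, ∑ e : E, (if e ∈ A then α A * (G {e} - G ∅) else 0) :=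
          Finset.sum_comm
      _ = ∑ A : Finset E, α A * ∑ e ∈ A, (G {e} - G ∅) := by
          refine Finset.sum_congr rfl fun A _ => ?_
          rw [Finset.sum_ite_mem, Finset.univ_inter, Finset.mul_sum]
  have hper : ∀ A : Finset E, (1 - a) * f A - G ∅ ≤ ∑ e ∈ A, (G {e} - G ∅) :=
    fun A => le_trans (by linarith [hGa A]) (hGm A)
  have hsum : ∑ A : Finset E, α A * ((1 - a) * f A - G ∅)
      ≤ ∑ A : Finset E, α A * ∑ e ∈ A, (G {e} - G ∅) :=
    Finset.sum_le_sum fun A _ => mul_le_mul_of_nonneg_left (hper A) (hα_nonneg A)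
  have hlhs : ∑ A : Finset E, α A * ((1 - a) * f A - G ∅)
      = (1 - a) * (∑ A : Finset E, α A * f A) - multilinearExt f y := by
    calc ∑ A : Finset E, α A * ((1 - a) * f A - G ∅)
        = ∑ A : Finset E, ((1 - a) * (α A * f A) - α A * G ∅) :=
          Finset.sum_congr rfl fun A _ => by ring
      _ = (1 - a) * (∑ A : Finset E, α A * f A) - (∑ A : Finset E, α A) * G ∅ := by
          rw [Finset.sum_sub_distrib, Finset.mul_sum, Finset.sum_mul]
      _ = (1 - a) * (∑ A : Finset E, α A * f A) - multilinearExt f y := by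
          rw [hα_sum, one_mul, hG0]
  rw [hrhs, ← hlhs]
  exact hsum

end Aux

/-- If `f` is non-negative and submodular, `y ≤ a` coordinate-wise, and `α` is a distribution
over subsets with marginals `x`, then
`Σ_e x_e (F(y ∨ χ_{e}) − F(y)) ≥ (1 − a)·Σ_A α_A f(A) − F(y)`. -/
theorem measured_greedy_gain_bound {E : Type*} [Fintype E] [DecidableEq E]
    (f : Finset E → ℝ)
    (hf_nonneg : ∀ A : Finset E, 0 ≤ f A)
    (hf_submodular : ∀ S T : Finset E, f (S ∪ T) + f (S ∩ T) ≤ f S + f T)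
    (a : ℝ) (ha : a ∈ Set.Icc (0 : ℝ) 1)
    (y : E → ℝ) (hy : ∀ e, y e ∈ Set.Icc (0 : ℝ) 1) (hya : ∀ e, y e ≤ a)
    (x : E → ℝ) (hx : ∀ e, x e ∈ Set.Icc (0 : ℝ) 1)
    (α : Finset E → ℝ) (hα_nonneg : ∀ A : Finset E, 0 ≤ α A)
    (hα_sum : ∑ A : Finset E, α A = 1)
    (hα_marg : ∀ j : E,
      ∑ A ∈ Finset.univ.filter (fun A : Finset E => j ∈ A), α A = x j) :
    (1 - a) * (∑ A : Finset E, α A * f A) - multilinearExt f y ≤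
      ∑ e : E, x e *
        (multilinearExt f (fun e' => max (y e') (if e' = e then 1 else 0)) -
          multilinearExt f y) :=
  measured_greedy_gain_bound_aux f hf_nonneg hf_submodular a ha y hy hya x hx
    α hα_nonneg hα_sum hα_marg
end

section
/- Let E be a finite ground set and f : 2^E → ℝ a submodular function with multilinear extension F. Then for every y ∈ [0,1]^E and every A ⊆ E, F(y ∨ χ_A) − F(y) ≤ Σ_{j∈A} (F(y ∨ χ_{{j}}) − F(y)), i.e., the marginal gain of raising all coordinates in A to 1 is at most the sum of the single-coordinate marginal gains (F is 'concave in positive directions'). -/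
open Finset

namespace MLEAux

variable {E : Type*} [Fintype E] [DecidableEq E]

/-- The weight of a subset `R` under the product distribution with marginals `y`. -/
def w (y : E → ℝ) (R : Finset E) : ℝ := (∏ e ∈ R, y e) * ∏ e ∈ Rᶜ, (1 - y e)

lemma w_nonneg {y : E → ℝ} (hy : ∀ e, y e ∈ Set.Icc (0:ℝ) 1) (R : Finset E) : 0 ≤ w y R :=
  mul_nonneg (Finset.prod_nonneg fun e _ => (hy e).1)
    (Finset.prod_nonneg fun e _ => by linarith [(hy e).2])

lemma base (f : Finset E → ℝ) (y : E → ℝ) :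
    multilinearExt f y = ∑ R : Finset E, w y R * f R := by
  unfold multilinearExt w
  exact Finset.sum_congr rfl fun R _ => by ring

lemma sum_split (j : E) (h : Finset E → ℝ) :
    ∑ R : Finset E, h R
      = ∑ R ∈ univ.filter (fun R => j ∉ R), (h R + h (insert j R)) := by
  rw [Finset.sum_add_distrib,
      ← Finset.sum_filter_add_sum_filter_not univ (fun R => j ∉ R) h]
  congr 1
  refine Finset.sum_bij' (fun R _ => R.erase j) (fun R _ => insert j R)
    (fun R hR => ?_) (fun R hR => ?_) (fun R hR => ?_) (fun R hR => ?_) (fun R hR => ?_)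
  · simp
  · simp
  · simp only [Finset.mem_filter, not_not] at hR
    exact Finset.insert_erase hR.2
  · simp only [Finset.mem_filter] at hR
    exact Finset.erase_insert hR.2
  · simp only [Finset.mem_filter, not_not] at hR
    rw [Finset.insert_erase hR.2]

lemma w_update_zero {y : E → ℝ} {j : E} {R : Finset E} (hj : j ∉ R) :
    w (Function.update y j 1) R = 0 := by
  unfold w
  rw [Finset.prod_eq_zero (Finset.mem_compl.2 hj) (by simp)]
  ring

lemma w_update {y : E → ℝ} {j : E} {R : Finset E} (hj : j ∉ R) :
    w (Function.update y j 1) (insert j R) = w y R + w y (insert j R) := by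
  unfold w
  have hjc : j ∉ (insert j R)ᶜ := by simp
  have h1 : ∏ e ∈ insert j R, Function.update y j 1 e = ∏ e ∈ R, y e := by
    rw [Finset.prod_insert hj, Function.update_self, one_mul]
    exact Finset.prod_congr rfl fun e he =>
      Function.update_of_ne (ne_of_mem_of_not_mem he hj) _ _
  have h2 : ∏ e ∈ (insert j R)ᶜ, (1 - Function.update y j 1 e)
      = ∏ e ∈ (insert j R)ᶜ, (1 - y e) :=
    Finset.prod_congr rfl fun e he => by
      rw [Function.update_of_ne (by rintro rfl; exact hjc he) 1 y]
  have h3 : ∏ e ∈ insert j R, y e = y j * ∏ e ∈ R, y e := Finset.prod_insert hj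
  have h4 : Rᶜ = insert j ((insert j R)ᶜ) := by
    rw [Finset.compl_insert, Finset.insert_erase (Finset.mem_compl.2 hj)]
  have h5 : ∏ e ∈ Rᶜ, (1 - y e) = (1 - y j) * ∏ e ∈ (insert j R)ᶜ, (1 - y e) := by
    rw [h4, Finset.prod_insert hjc]
  rw [h1, h2, h3, h5]; ring

lemma ext_eq (f : Finset E → ℝ) (A : Finset E) :
    ∀ y : E → ℝ, multilinearExt f (fun e => if e ∈ A then (1:ℝ) else y e)
      = ∑ R : Finset E, w y R * f (R ∪ A) := by
  induction A using Finset.induction_on with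
  | empty =>
    intro y
    simpa using base f y
  | @insert j A hj ih =>
    intro y
    have hv : (fun e => if e ∈ insert j A then (1:ℝ) else y e)
        = fun e => if e ∈ A then (1:ℝ) else Function.update y j 1 e := by
      funext e
      by_cases heA : e ∈ A
      · simp [heA, Finset.mem_insert]
      · by_cases hej : e = j
        · subst hej; simp [heA, Function.update_self]
        · simp [heA, hej, Function.update_of_ne hej]
    rw [hv, ih (Function.update y j 1)]
    rw [sum_split j (fun R => w (Function.update y j 1) R * f (R ∪ A)),
        sum_split j (fun R => w y R * f (R ∪ insert j A))]
    apply Finset.sum_congr rfl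
    intro R hR
    have hjR : j ∉ R := by
      have := (Finset.mem_filter.1 hR).2
      simpa using this
    have e1 : insert j R ∪ A = R ∪ insert j A := by
      simp [Finset.insert_union, Finset.union_insert]
    have e2 : insert j R ∪ insert j A = R ∪ insert j A := by
      simp [Finset.insert_union, Finset.union_insert]
    rw [w_update_zero hjR, w_update hjR, e1, e2]
    ring

end MLEAux

/-- The multilinear extension of a submodular function is concave in positive directions:
the marginal gain of raising all coordinates of `A` to `1` is at most the sum of the
single-coordinate marginal gains. -/
theorem multilinearExt_concave_in_positive_directions
    {E : Type*} [Fintype E] [DecidableEq E]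
    (f : Finset E → ℝ)
    (hf_submodular : ∀ S T : Finset E, f (S ∪ T) + f (S ∩ T) ≤ f S + f T)
    (y : E → ℝ) (hy : ∀ e, y e ∈ Set.Icc (0 : ℝ) 1)
    (A : Finset E) :
    multilinearExt f (fun e => max (y e) (if e ∈ A then 1 else 0)) - multilinearExt f y ≤
      ∑ j ∈ A,
        (multilinearExt f (fun e => max (y e) (if e = j then 1 else 0)) -
          multilinearExt f y) := by
  have hvec : ∀ B : Finset E, (fun e => max (y e) (if e ∈ B then (1:ℝ) else 0))
      = fun e => if e ∈ B then (1:ℝ) else y e := by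
    intro B; funext e
    by_cases h : e ∈ B
    · simp [h, max_eq_right (hy e).2]
    · simp [h, max_eq_left (hy e).1]
  have hsingle : ∀ j : E, (fun e => max (y e) (if e = j then (1:ℝ) else 0))
      = fun e => if e ∈ ({j} : Finset E) then (1:ℝ) else y e := by
    intro j
    rw [← hvec {j}]
    simp [Finset.mem_singleton]
  induction A using Finset.induction_on with
  | empty =>
    rw [hvec ∅]
    simp
  | @insert j A hj ih =>
    rw [Finset.sum_insert hj, hvec (insert j A), hsingle j]
    have key : multilinearExt f (fun e => if e ∈ insert j A then (1:ℝ) else y e)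
        + multilinearExt f y
        ≤ multilinearExt f (fun e => if e ∈ A then (1:ℝ) else y e)
          + multilinearExt f (fun e => if e ∈ ({j} : Finset E) then (1:ℝ) else y e) := by
      rw [MLEAux.ext_eq f (insert j A) y, MLEAux.ext_eq f A y, MLEAux.ext_eq f {j} y,
        MLEAux.base f y]
      rw [← Finset.sum_add_distrib, ← Finset.sum_add_distrib]
      apply Finset.sum_le_sum
      intro R _
      have hsub := hf_submodular (R ∪ A) (R ∪ {j})
      have hU : (R ∪ A) ∪ (R ∪ {j}) = R ∪ insert j A := by
        ext e
        simp [Finset.mem_insert]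
        tauto
      have hI : (R ∪ A) ∩ (R ∪ {j}) = R := by
        ext e
        simp only [Finset.mem_inter, Finset.mem_union, Finset.mem_singleton]
        constructor
        · rintro ⟨h1 | h1, h2 | h2⟩
          · exact h1
          · exact h1
          · exact h2
          · subst h2; exact absurd h1 hj
        · intro h; exact ⟨Or.inl h, Or.inl h⟩
      rw [hU, hI] at hsub
      have hwn := MLEAux.w_nonneg hy R
      nlinarith [mul_le_mul_of_nonneg_left hsub hwn]
    have hA : multilinearExt f (fun e => max (y e) (if e ∈ A then (1:ℝ) else 0))
        = multilinearExt f (fun e => if e ∈ A then (1:ℝ) else y e) := by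
      rw [hvec A]
    linarith [key, ih, hA]
end

section
/- (Blocking set lemma.) In the setting below, for every element e ∈ E with p_e x_e > 0, the expected weight of its blocking set satisfies E[ Σ_{f ∈ Γ(e)} p_f · 1[f ∈ R(x)] ] ≤ 1, where the expectation is taken over the independent choices of critical indices and of the random set R(x). -/
open Finset

lemma sum_fun_prod' {ι κ : Type*} [Fintype ι] [DecidableEq ι] [Fintype κ]
    (r : ι → κ → ℝ) :
    ∑ c : ι → κ, ∏ i, r i (c i) = ∏ i, ∑ k, r i k := by
  rw [Finset.prod_univ_sum, Fintype.piFinset_univ]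


lemma sum_QT_ind' {E : Type*} [Fintype E] [DecidableEq E] (x : E → ℝ) (f : E) :
    ∑ T : Finset E, ((∏ g ∈ T, x g) * ∏ g ∈ Tᶜ, (1 - x g)) * (if f ∈ T then 1 else 0)
      = x f := by
  have h1 : ∀ T : Finset E, ((∏ g ∈ T, x g) * ∏ g ∈ Tᶜ, (1 - x g)) * (if f ∈ T then 1 else 0)
      = (∏ g ∈ T, x g) * ∏ g ∈ univ \ T, (if g = f then 0 else 1 - x g) := by
    intro T
    by_cases hf : f ∈ T
    · rw [if_pos hf, mul_one]
      congr 1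
      rw [← Finset.compl_eq_univ_sdiff]
      refine Finset.prod_congr rfl fun g hg => ?_
      rw [if_neg]
      intro h; subst h; exact (Finset.mem_compl.mp hg) hf
    · rw [if_neg hf, mul_zero]
      symm
      rw [mul_eq_zero]; right
      exact Finset.prod_eq_zero (i := f) (by simp [hf]) (by simp)
  simp only [h1]
  rw [← Finset.powerset_univ, ← Finset.prod_add]
  rw [Finset.prod_eq_single f (fun g _ hg => by rw [if_neg hg]; ring) (by simp)]
  simp

lemma sum_fun_two' {ι κ : Type*} [Fintype ι] [DecidableEq ι] [Fintype κ] [DecidableEq κ]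
    (q : ι → κ → ℝ) (hq : ∀ i, ∑ k, q i k = 1) (a b : ι) (hab : a ≠ b) (H : κ → κ → ℝ) :
    ∑ c : ι → κ, (∏ i, q i (c i)) * H (c a) (c b) = ∑ k, ∑ l, q a k * q b l * H k l := by
  have key : ∀ (k l : κ),
      (∑ c : ι → κ, if c a = k ∧ c b = l then (∏ i, q i (c i)) else 0)
        = q a k * q b l := by
    intro k l
    have hr : ∀ c : ι → κ, (if c a = k ∧ c b = l then (∏ i, q i (c i)) else 0)
        = ∏ i, (if i = a then (if c i = k then q i (c i) else 0)
                else if i = b then (if c i = l then q i (c i) else 0) else q i (c i)) := by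
      intro c
      by_cases h1 : c a = k
      · by_cases h2 : c b = l
        · rw [if_pos ⟨h1, h2⟩]
          refine Finset.prod_congr rfl fun i _ => ?_
          by_cases hia : i = a
          · subst hia; simp [h1]
          · by_cases hib : i = b
            · subst hib; simp [h2, hia]
            · simp [hia, hib]
        · rw [if_neg (by tauto)]
          refine (Finset.prod_eq_zero (Finset.mem_univ b) ?_).symm
          simp [Ne.symm hab, h2]
      · rw [if_neg (by tauto)]
        refine (Finset.prod_eq_zero (Finset.mem_univ a) ?_).symm
        simp [h1]
    rw [Finset.sum_congr rfl (fun c _ => hr c),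
      sum_fun_prod' (fun i k' => if i = a then (if k' = k then q i k' else 0)
        else if i = b then (if k' = l then q i k' else 0) else q i k')]
    have hcol : ∀ i : ι, (∑ k' : κ, (if i = a then (if k' = k then q i k' else 0)
        else if i = b then (if k' = l then q i k' else 0) else q i k'))
        = (if i = a then q a k else if i = b then q b l else 1) := by
      intro i
      by_cases hia : i = a
      · subst hia; simp [Finset.sum_ite_eq' Finset.univ k (q i)]
      · by_cases hib : i = b
        · subst hib; simp [hia, Finset.sum_ite_eq' Finset.univ l (q i)]
        · simp [hia, hib, hq i]
    rw [Finset.prod_congr rfl (fun i _ => hcol i)]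
    rw [← Finset.mul_prod_erase Finset.univ _ (Finset.mem_univ a),
        ← Finset.mul_prod_erase _ _ (Finset.mem_erase.mpr ⟨Ne.symm hab, Finset.mem_univ b⟩)]
    rw [if_pos rfl, if_neg (Ne.symm hab), if_pos rfl]
    rw [Finset.prod_eq_one (fun i hi => ?_), mul_one]
    rw [Finset.mem_erase, Finset.mem_erase] at hi
    rw [if_neg hi.2.1, if_neg hi.1]
  calc ∑ c : ι → κ, (∏ i, q i (c i)) * H (c a) (c b)
      = ∑ c : ι → κ, ∑ k, ∑ l,
          (if c a = k ∧ c b = l then (∏ i, q i (c i)) else 0) * H k l := by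
        refine Finset.sum_congr rfl fun c _ => ?_
        have : ∀ (k l : κ), (if c a = k ∧ c b = l then (∏ i, q i (c i)) else 0) * H k l
            = if c a = k then (if c b = l then (∏ i, q i (c i)) * H k l else 0) else 0 := by
          intro k l; split_ifs with h1 h2 h3 <;> simp_all
        simp only [this, Finset.sum_ite_eq]
        simp
    _ = ∑ k, ∑ l, (∑ c : ι → κ,
          (if c a = k ∧ c b = l then (∏ i, q i (c i)) else 0)) * H k l := by
        rw [Finset.sum_comm]
        refine Finset.sum_congr rfl fun k _ => ?_
        rw [Finset.sum_comm]
        refine Finset.sum_congr rfl fun l _ => ?_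
        rw [Finset.sum_mul]
    _ = ∑ k, ∑ l, q a k * q b l * H k l := by
        refine Finset.sum_congr rfl fun k _ => Finset.sum_congr rfl fun l _ => ?_
        rw [key]

/-- **Blocking set lemma.** Suppose `p·x` decomposes as a convex combination
`p_e x_e = Σ_{i : e ∈ B_i} β_i` over sets `B_1,…,B_m`, with transversal mappings
`φ[B_i, B_j] : B_i → B_j ∪ {⊥}` that hit each `a ∈ B_j` at most once. Choose, independently
for each element `e` with `p_e x_e > 0`, a critical index `c(e)` with
`ℙ[c(e) = i] = β_i / (p_e x_e)` (supported on `{i : e ∈ B_i}`), and independently include each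
element `f` in a random set `T = R(x)` with probability `x_f`. Then the expected weight
of the blocking set `Γ(e) = {f ≠ e : p_f x_f > 0, φ[B_{c(f)}, B_{c(e)}](f) = e}`
satisfies `𝔼[Σ_{f ∈ Γ(e)} p_f · 1[f ∈ R(x)]] ≤ 1`. -/
theorem blocking_set_lemma {E : Type*} [Fintype E] [DecidableEq E]
    (p x : E → ℝ)
    (hp : ∀ e, p e ∈ Set.Icc (0 : ℝ) 1) (hx : ∀ e, x e ∈ Set.Icc (0 : ℝ) 1)
    (m : ℕ) (B : Fin m → Finset E) (β : Fin m → ℝ)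
    (hβ : ∀ i, 0 ≤ β i) (hβsum : ∑ i, β i = 1)
    (hdecomp : ∀ e, p e * x e = ∑ i ∈ Finset.univ.filter (fun i => e ∈ B i), β i)
    (φ : Fin m → Fin m → E → Option E)
    (hφdom : ∀ i j, ∀ b ∈ B i, ∀ a, φ i j b = some a → a ∈ B j)
    (hφinj : ∀ i j, ∀ a ∈ B j, ∀ b₁ ∈ B i, ∀ b₂ ∈ B i,
        φ i j b₁ = some a → φ i j b₂ = some a → b₁ = b₂)
    (e : E) (he : 0 < p e * x e) :
    ∑ c : {f : E // 0 < p f * x f} → Fin m,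
      ∑ T : Finset E,
        ((∏ f : {f : E // 0 < p f * x f},
            (if f.val ∈ B (c f) then β (c f) / (p f.val * x f.val) else 0)) *
          ((∏ g ∈ T, x g) * ∏ g ∈ Tᶜ, (1 - x g))) *
        (∑ f : {f : E // 0 < p f * x f},
          (if f.val ≠ e ∧ φ (c f) (c ⟨e, he⟩) f.val = some e ∧ f.val ∈ T
           then p f.val else 0)) ≤ 1 := by
  classical
  set S := {f : E // 0 < p f * x f} with hS
  set e₀ := (⟨e, he⟩ : S) with he0def
  set q := (fun (f : S) (i : Fin m) =>
    if f.val ∈ B i then β i / (p f.val * x f.val) else 0) with hq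
  have hqnn : ∀ f i, 0 ≤ q f i := by
    intro f i
    simp only [hq]
    split_ifs
    · exact div_nonneg (hβ i) (le_of_lt f.2)
    · exact le_rfl
  have hqsum : ∀ f : S, ∑ i, q f i = 1 := by
    intro f
    have hne : p f.val * x f.val ≠ 0 := ne_of_gt f.2
    simp only [hq]
    rw [← Finset.sum_filter, ← Finset.sum_div, ← hdecomp, div_self hne]
  -- step 1: swap sums and integrate out T
  have step1 : (∑ c : S → Fin m, ∑ T : Finset E,
        ((∏ f : S, q f (c f)) * ((∏ g ∈ T, x g) * ∏ g ∈ Tᶜ, (1 - x g))) *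
        (∑ f : S, (if f.val ≠ e ∧ φ (c f) (c e₀) f.val = some e ∧ f.val ∈ T
           then p f.val else 0)))
      = ∑ f : S, ∑ c : S → Fin m, (∏ g : S, q g (c g)) *
          (if f.val ≠ e ∧ φ (c f) (c e₀) f.val = some e
             then p f.val * x f.val else 0) := by
    have inner : ∀ c : S → Fin m,
        (∑ T : Finset E,
          ((∏ f : S, q f (c f)) * ((∏ g ∈ T, x g) * ∏ g ∈ Tᶜ, (1 - x g))) *
          (∑ f : S, (if f.val ≠ e ∧ φ (c f) (c e₀) f.val = some e ∧ f.val ∈ T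
             then p f.val else 0)))
        = ∑ f : S, (∏ g : S, q g (c g)) *
            (if f.val ≠ e ∧ φ (c f) (c e₀) f.val = some e
               then p f.val * x f.val else 0) := by
      intro c
      simp only [Finset.mul_sum]
      rw [Finset.sum_comm]
      refine Finset.sum_congr rfl fun f _ => ?_
      have hpt : ∀ T : Finset E,
          ((∏ f : S, q f (c f)) * ((∏ g ∈ T, x g) * ∏ g ∈ Tᶜ, (1 - x g))) *
            (if f.val ≠ e ∧ φ (c f) (c e₀) f.val = some e ∧ f.val ∈ T
               then p f.val else 0)
          = ((∏ g : S, q g (c g)) *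
              (if f.val ≠ e ∧ φ (c f) (c e₀) f.val = some e then p f.val else 0)) *
            (((∏ g ∈ T, x g) * ∏ g ∈ Tᶜ, (1 - x g)) * (if f.val ∈ T then 1 else 0)) := by
        intro T
        by_cases h1 : f.val ≠ e ∧ φ (c f) (c e₀) f.val = some e
        · by_cases h2 : f.val ∈ T
          · rw [if_pos ⟨h1.1, h1.2, h2⟩, if_pos h1, if_pos h2]; ring
          · rw [if_neg (by tauto), if_pos h1, if_neg h2]; ring
        · rw [if_neg (by tauto), if_neg h1]; ring
      rw [Finset.sum_congr rfl (fun T _ => hpt T), ← Finset.mul_sum,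
        sum_QT_ind' x f.val]
      split_ifs with h
      · ring
      · ring
    rw [Finset.sum_congr rfl (fun c _ => inner c), Finset.sum_comm]
  rw [step1]
  have step2 : ∀ f : S,
      (∑ c : S → Fin m, (∏ g : S, q g (c g)) *
        (if f.val ≠ e ∧ φ (c f) (c e₀) f.val = some e
           then p f.val * x f.val else 0))
      = ∑ i : Fin m, ∑ j : Fin m,
          (if f.val ∈ B i ∧ f.val ≠ e ∧ φ i j f.val = some e
             then β i * q e₀ j else 0) := by
    intro f
    by_cases hfe : f = e₀
    · subst hfe
      have hv : (e₀ : S).val = e := rfl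
      simp [hv]
    · rw [sum_fun_two' q hqsum f e₀ hfe
        (fun i j => if f.val ≠ e ∧ φ i j f.val = some e then p f.val * x f.val else 0)]
      refine Finset.sum_congr rfl fun i _ => Finset.sum_congr rfl fun j _ => ?_
      by_cases hB : f.val ∈ B i
      · by_cases hc : f.val ≠ e ∧ φ i j f.val = some e
        · rw [if_pos hc, if_pos ⟨hB, hc⟩]
          have hD : p f.val * x f.val ≠ 0 := ne_of_gt f.2
          simp only [hq, if_pos hB]
          field_simp
          rw [div_eq_iff hD]; ring
        · rw [if_neg hc, if_neg (by tauto), mul_zero]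
      · have h0 : q f i = 0 := by simp [hq, hB]
        rw [h0, zero_mul, zero_mul, if_neg (fun h => hB h.1)]
  rw [Finset.sum_congr rfl (fun f _ => step2 f), Finset.sum_comm]
  have step3 : ∀ i : Fin m,
      (∑ f : S, ∑ j : Fin m,
        (if f.val ∈ B i ∧ f.val ≠ e ∧ φ i j f.val = some e
           then β i * q e₀ j else 0))
      ≤ ∑ j : Fin m, β i * q e₀ j := by
    intro i
    rw [Finset.sum_comm]
    refine Finset.sum_le_sum fun j _ => ?_
    rw [← Finset.sum_filter]
    rw [Finset.sum_const]
    have hcard : (Finset.univ.filter (fun f : S =>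
        f.val ∈ B i ∧ f.val ≠ e ∧ φ i j f.val = some e)).card ≤ 1 := by
      rw [Finset.card_le_one]
      intro f₁ h₁ f₂ h₂
      simp only [Finset.mem_filter] at h₁ h₂
      have heB : e ∈ B j := hφdom i j f₁.val h₁.2.1 e h₁.2.2.2
      exact Subtype.ext (hφinj i j e heB f₁.val h₁.2.1 f₂.val h₂.2.1 h₁.2.2.2 h₂.2.2.2)
    have hv : 0 ≤ β i * q e₀ j := mul_nonneg (hβ i) (hqnn e₀ j)
    calc ((Finset.univ.filter (fun f : S =>
        f.val ∈ B i ∧ f.val ≠ e ∧ φ i j f.val = some e)).card : ℕ) • (β i * q e₀ j)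
        ≤ 1 • (β i * q e₀ j) := by
          exact nsmul_le_nsmul_left hv hcard
      _ = β i * q e₀ j := one_smul _ _
  calc (∑ i : Fin m, ∑ f : S, ∑ j : Fin m,
        (if f.val ∈ B i ∧ f.val ≠ e ∧ φ i j f.val = some e
           then β i * q e₀ j else 0))
      ≤ ∑ i : Fin m, ∑ j : Fin m, β i * q e₀ j :=
        Finset.sum_le_sum fun i _ => step3 i
    _ = ∑ i : Fin m, β i * ∑ j : Fin m, q e₀ j := by
        refine Finset.sum_congr rfl fun i _ => ?_
        rw [Finset.mul_sum]
    _ = 1 := by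
        rw [Finset.sum_congr rfl fun i _ => by rw [hqsum e₀, mul_one]]
        exact hβsum
end

section
/- (Blocking set lemma, scaled inner version.) In the setting below with scaling parameter b ∈ (0,1], for every element e ∈ E with p_e x_e > 0, the expected weight of its blocking set satisfies E[ Σ_{f ∈ Γ(e)} p_f · 1[f ∈ R(x)] ] ≤ b, where the expectation is taken over the independent choices of critical indices and of the random set R(x). -/
open Finset

lemma aux_sum_T {E : Type*} [Fintype E] [DecidableEq E] (x : E → ℝ) (f : E) :
    ∑ T : Finset E, ((∏ g ∈ T, x g) * ∏ g ∈ Tᶜ, (1 - x g)) * (if f ∈ T then (1:ℝ) else 0)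
      = x f := by
  have h1 : ∀ T : Finset E,
      ((∏ g ∈ T, x g) * ∏ g ∈ Tᶜ, (1 - x g)) * (if f ∈ T then (1:ℝ) else 0)
      = (∏ g ∈ T, x g) * ∏ g ∈ Tᶜ, (if g = f then 0 else 1 - x g) := by
    intro T
    by_cases hf : f ∈ T
    · simp only [hf, if_true, mul_one]
      congr 1
      refine Finset.prod_congr rfl ?_
      intro g hg
      have : g ≠ f := by rintro rfl; simp [hf] at hg
      simp [this]
    · have hfc : f ∈ Tᶜ := by simpa using hf
      have hz : (∏ g ∈ Tᶜ, (if g = f then (0:ℝ) else 1 - x g)) = 0 :=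
        Finset.prod_eq_zero hfc (by simp)
      simp [hf, hz]
  simp_rw [h1]
  have h2 : ∀ T : Finset E, (∏ g ∈ T, x g) * ∏ g ∈ Tᶜ, (if g = f then 0 else 1 - x g)
      = (∏ g ∈ T, x g) * ∏ g ∈ univ \ T, (if g = f then 0 else 1 - x g) := by
    intro T; rw [Finset.compl_eq_univ_sdiff]
  simp_rw [h2]
  rw [← Finset.powerset_univ, ← Finset.prod_add]
  have : ∀ g, x g + (if g = f then (0:ℝ) else 1 - x g) = if g = f then x g else 1 := by
    intro g; split_ifs <;> ring
  simp_rw [this]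
  rw [Finset.prod_ite_eq' Finset.univ f (fun g => x g)]
  simp

lemma aux_sum_c {S : Type*} [Fintype S] [DecidableEq S] {m : ℕ} (Q : S → Fin m → ℝ) :
    ∑ c : S → Fin m, ∏ g, Q g (c g) = ∏ g, ∑ k, Q g k := by
  rw [Finset.prod_univ_sum, Fintype.piFinset_univ]

lemma aux_two_point {S : Type*} [Fintype S] [DecidableEq S] {m : ℕ} (q : S → Fin m → ℝ)
    (hq1 : ∀ g, ∑ k, q g k = 1) (a c₀ : S) (hab : a ≠ c₀) (F : Fin m → Fin m → ℝ) :
    ∑ c : S → Fin m, (∏ g, q g (c g)) * F (c a) (c c₀)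
      = ∑ i, ∑ j, q a i * q c₀ j * F i j := by
  set Q : Fin m → Fin m → S → Fin m → ℝ := fun i j g k =>
    if g = a then (if k = i then q g k else 0)
    else if g = c₀ then (if k = j then q g k else 0) else q g k with hQdef
  have hQ : ∀ (i j) (c : S → Fin m),
      (∏ g, Q i j g (c g)) = if i = c a ∧ j = c c₀ then (∏ g, q g (c g)) else 0 := by
    intro i j c
    by_cases hij : i = c a ∧ j = c c₀
    · rw [if_pos hij]
      refine Finset.prod_congr rfl fun g _ => ?_
      simp only [hQdef]
      by_cases hga : g = a
      · subst hga; simp [hij.1.symm]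
      · by_cases hgb : g = c₀
        · subst hgb; simp [hga, hij.2.symm]
        · simp [hga, hgb]
    · rw [if_neg hij]
      rcases not_and_or.mp hij with h | h
      · refine Finset.prod_eq_zero (Finset.mem_univ a) ?_
        simp only [hQdef, if_pos rfl]
        rw [if_neg (fun hh => h hh.symm)]
      · refine Finset.prod_eq_zero (Finset.mem_univ c₀) ?_
        simp only [hQdef]
        rw [if_neg (fun hh : c₀ = a => hab hh.symm), if_pos trivial,
          if_neg (fun hh : c c₀ = j => h hh.symm)]
  have key : ∀ c : S → Fin m,
      (∏ g, q g (c g)) * F (c a) (c c₀) = ∑ i, ∑ j, (∏ g, Q i j g (c g)) * F i j := by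
    intro c
    simp_rw [hQ, ite_and, ite_mul, zero_mul]
    have hin : ∀ i : Fin m,
        (∑ j, if i = c a then if j = c c₀ then (∏ g, q g (c g)) * F i j else 0 else 0)
        = if i = c a then (∏ g, q g (c g)) * F i (c c₀) else 0 := by
      intro i
      by_cases hi : i = c a
      · simp [hi, Finset.sum_ite_eq']
      · simp [hi]
    simp_rw [hin]
    simp [Finset.sum_ite_eq']
  simp_rw [key]
  rw [Finset.sum_comm]
  refine Finset.sum_congr rfl fun i _ => ?_
  rw [Finset.sum_comm]
  refine Finset.sum_congr rfl fun j _ => ?_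
  rw [← Finset.sum_mul, aux_sum_c]
  have hfac : ∀ g : S, (∑ k, Q i j g k)
      = (if g = a then q a i else 1) * (if g = c₀ then q c₀ j else 1) := by
    intro g
    by_cases hga : g = a
    · subst hga
      simp [hQdef, Finset.sum_ite_eq', if_neg hab]
    · by_cases hgb : g = c₀
      · subst hgb
        simp [hQdef, hga, Finset.sum_ite_eq']
      · simp [hQdef, hga, hgb, hq1 g]
  simp_rw [hfac]
  rw [Finset.prod_mul_distrib, Finset.prod_ite_eq' Finset.univ a (fun _ => q a i),
    Finset.prod_ite_eq' Finset.univ c₀ (fun _ => q c₀ j)]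
  simp

/-- **Blocking set lemma, scaled inner version.** With scaling parameter `b ∈ (0,1]`,
suppose `(1/b)·p_e x_e = Σ_{i : e ∈ B_i} β_i` over sets `B_1,…,B_m` with `Σ_i β_i = 1`,
with transversal mappings `φ[B_i, B_j]` hitting each `a ∈ B_j` at most once. Choose,
independently for each `e` with `p_e x_e > 0`, a critical index `c(e)` with
`ℙ[c(e) = i] = b·β_i / (p_e x_e)` (supported on `{i : e ∈ B_i}`), and independently include
each `f` in `T = R(x)` with probability `x_f`. Then the expected weight of the blocking set
`Γ(e) = {f ≠ e : p_f x_f > 0, φ[B_{c(f)}, B_{c(e)}](f) = e}` satisfies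
`𝔼[Σ_{f ∈ Γ(e)} p_f · 1[f ∈ R(x)]] ≤ b`. -/
theorem blocking_set_lemma_scaled_inner {E : Type*} [Fintype E] [DecidableEq E]
    (p x : E → ℝ)
    (hp : ∀ e, p e ∈ Set.Icc (0 : ℝ) 1) (hx : ∀ e, x e ∈ Set.Icc (0 : ℝ) 1)
    (b : ℝ) (hb : b ∈ Set.Ioc (0 : ℝ) 1)
    (m : ℕ) (B : Fin m → Finset E) (β : Fin m → ℝ)
    (hβ : ∀ i, 0 ≤ β i) (hβsum : ∑ i, β i = 1)
    (hdecomp : ∀ e, (1 / b) * (p e * x e) = ∑ i ∈ Finset.univ.filter (fun i => e ∈ B i), β i)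
    (φ : Fin m → Fin m → E → Option E)
    (hφdom : ∀ i j, ∀ b' ∈ B i, ∀ a, φ i j b' = some a → a ∈ B j)
    (hφinj : ∀ i j, ∀ a ∈ B j, ∀ b₁ ∈ B i, ∀ b₂ ∈ B i,
        φ i j b₁ = some a → φ i j b₂ = some a → b₁ = b₂)
    (e : E) (he : 0 < p e * x e) :
    ∑ c : {f : E // 0 < p f * x f} → Fin m,
      ∑ T : Finset E,
        ((∏ f : {f : E // 0 < p f * x f},
            (if f.val ∈ B (c f) then b * β (c f) / (p f.val * x f.val) else 0)) *
          ((∏ g ∈ T, x g) * ∏ g ∈ Tᶜ, (1 - x g))) *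
        (∑ f : {f : E // 0 < p f * x f},
          (if f.val ≠ e ∧ φ (c f) (c ⟨e, he⟩) f.val = some e ∧ f.val ∈ T
           then p f.val else 0)) ≤ b := by
  classical
  set S := {f : E // 0 < p f * x f} with hS
  set q : S → Fin m → ℝ :=
    fun f i => if f.val ∈ B i then b * β i / (p f.val * x f.val) else 0 with hqdef
  set G : S → Fin m → Fin m → ℝ :=
    fun f i j => if f.val ≠ e ∧ φ i j f.val = some e then p f.val else 0 with hGdef
  set e₀ : S := ⟨e, he⟩ with he₀
  have hb0 : (0:ℝ) < b := hb.1
  have hq0 : ∀ (f : S) i, 0 ≤ q f i := by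
    intro f i
    simp only [hqdef]
    split_ifs
    · exact div_nonneg (mul_nonneg hb0.le (hβ i)) f.2.le
    · exact le_rfl
  have hpne : ∀ f : S, p f.val ≠ 0 := by
    intro f
    intro h
    have := f.2
    rw [h, zero_mul] at this
    exact lt_irrefl 0 this
  have hxne : ∀ f : S, x f.val ≠ 0 := by
    intro f
    intro h
    have := f.2
    rw [h, mul_zero] at this
    exact lt_irrefl 0 this
  have hq1 : ∀ f : S, ∑ i, q f i = 1 := by
    intro f
    simp only [hqdef]
    rw [← Finset.sum_filter]
    have h1 : ∑ i ∈ Finset.univ.filter (fun i => f.val ∈ B i), b * β i / (p f.val * x f.val)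
        = (b / (p f.val * x f.val)) * ∑ i ∈ Finset.univ.filter (fun i => f.val ∈ B i), β i := by
      rw [Finset.mul_sum]
      refine Finset.sum_congr rfl fun i _ => ?_
      ring
    rw [h1, ← hdecomp]
    have hne : p f.val * x f.val ≠ 0 := ne_of_gt f.2
    have hbne : b ≠ 0 := ne_of_gt hb0
    field_simp
    exact div_self hne
  -- Step 1: sum out T
  have step1 : ∀ c : S → Fin m,
      (∑ T : Finset E, ((∏ f, q f (c f)) * ((∏ g ∈ T, x g) * ∏ g ∈ Tᶜ, (1 - x g))) *
        (∑ f : S, if f.val ≠ e ∧ φ (c f) (c e₀) f.val = some e ∧ f.val ∈ T then p f.val else 0))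
      = (∏ f, q f (c f)) * ∑ f : S, G f (c f) (c e₀) * x f.val := by
    intro c
    have hterm : ∀ (T : Finset E) (f : S),
        (if f.val ≠ e ∧ φ (c f) (c e₀) f.val = some e ∧ f.val ∈ T then p f.val else 0)
        = G f (c f) (c e₀) * (if f.val ∈ T then (1:ℝ) else 0) := by
      intro T f
      simp only [hGdef]
      by_cases h1 : f.val ≠ e ∧ φ (c f) (c e₀) f.val = some e
      · by_cases h2 : f.val ∈ T
        · rw [if_pos ⟨h1.1, h1.2, h2⟩, if_pos h1, if_pos h2, mul_one]
        · rw [if_neg (fun h => h2 h.2.2), if_pos h1, if_neg h2, mul_zero]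
      · rw [if_neg (fun h => h1 ⟨h.1, h.2.1⟩), if_neg h1, zero_mul]
    simp_rw [hterm]
    simp_rw [Finset.mul_sum]
    rw [Finset.sum_comm]
    refine Finset.sum_congr rfl fun f _ => ?_
    rw [← aux_sum_T x f.val, Finset.mul_sum, Finset.mul_sum]
    exact Finset.sum_congr rfl fun T _ => by ring
  -- Step 2: marginalize over c
  have step2 : ∀ f : S, (∑ c : S → Fin m, (∏ g, q g (c g)) * G f (c f) (c e₀))
      = ∑ i, ∑ j, q f i * q e₀ j * G f i j := by
    intro f
    by_cases hf : f = e₀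
    · subst hf
      have hG0 : ∀ i j, G e₀ i j = 0 := by
        intro i j
        simp only [hGdef]
        rw [if_neg (fun h => h.1 rfl)]
      simp [hG0]
    · exact aux_two_point q hq1 f e₀ hf (G f)
  -- inner bound
  have hInner : ∀ j : Fin m, (∑ i, ∑ f : S, x f.val * q f i * G f i j) ≤ b := by
    intro j
    have hterm : ∀ (i : Fin m) (f : S), x f.val * q f i * G f i j
        = if f.val ∈ B i ∧ f.val ≠ e ∧ φ i j f.val = some e then b * β i else 0 := by
      intro i f
      simp only [hqdef, hGdef]
      by_cases h1 : f.val ∈ B i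
      · by_cases h2 : f.val ≠ e ∧ φ i j f.val = some e
        · rw [if_pos h1, if_pos h2, if_pos ⟨h1, h2⟩]
          field_simp [hpne f, hxne f]
        · have hc : ¬(f.val ∈ B i ∧ f.val ≠ e ∧ φ i j f.val = some e) := fun h => h2 h.2
          rw [if_neg h2, if_neg hc, mul_zero]
      · have hc : ¬(f.val ∈ B i ∧ f.val ≠ e ∧ φ i j f.val = some e) := fun h => h1 h.1
        rw [if_neg h1, if_neg hc, mul_zero, zero_mul]
    simp_rw [hterm]
    have hper : ∀ i : Fin m,
        (∑ f : S, if f.val ∈ B i ∧ f.val ≠ e ∧ φ i j f.val = some e then b * β i else 0)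
        ≤ b * β i := by
      intro i
      rw [← Finset.sum_filter, Finset.sum_const, nsmul_eq_mul]
      have hcard : (Finset.univ.filter
          (fun f : S => f.val ∈ B i ∧ f.val ≠ e ∧ φ i j f.val = some e)).card ≤ 1 := by
        refine Finset.card_le_one.mpr ?_
        intro f₁ h₁ f₂ h₂
        rw [Finset.mem_filter] at h₁ h₂
        obtain ⟨-, hB1, -, hφ1⟩ := h₁
        obtain ⟨-, hB2, -, hφ2⟩ := h₂
        have heBj : e ∈ B j := hφdom i j f₁.val hB1 e hφ1
        exact Subtype.ext (hφinj i j e heBj f₁.val hB1 f₂.val hB2 hφ1 hφ2)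
      calc ((Finset.univ.filter
          (fun f : S => f.val ∈ B i ∧ f.val ≠ e ∧ φ i j f.val = some e)).card : ℝ) * (b * β i)
          ≤ 1 * (b * β i) := by
            refine mul_le_mul_of_nonneg_right ?_ (mul_nonneg hb0.le (hβ i))
            exact_mod_cast hcard
        _ = b * β i := one_mul _
    calc (∑ i, ∑ f : S, if f.val ∈ B i ∧ f.val ≠ e ∧ φ i j f.val = some e then b * β i else 0)
        ≤ ∑ i, b * β i := Finset.sum_le_sum fun i _ => hper i
      _ = b := by rw [← Finset.mul_sum, hβsum, mul_one]
  -- assemble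
  have swap13 : ∀ t : S → Fin m → Fin m → ℝ,
      (∑ f : S, ∑ i, ∑ j, t f i j) = ∑ j, ∑ i, ∑ f : S, t f i j := by
    intro t
    calc (∑ f : S, ∑ i, ∑ j, t f i j) = ∑ i, ∑ j, ∑ f : S, t f i j := by
          rw [Finset.sum_comm]
          exact Finset.sum_congr rfl fun i _ => Finset.sum_comm
      _ = ∑ j, ∑ i, ∑ f : S, t f i j := Finset.sum_comm
  calc (∑ c : S → Fin m,
      ∑ T : Finset E,
        ((∏ f : S, q f (c f)) * ((∏ g ∈ T, x g) * ∏ g ∈ Tᶜ, (1 - x g))) *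
        (∑ f : S, if f.val ≠ e ∧ φ (c f) (c e₀) f.val = some e ∧ f.val ∈ T
           then p f.val else 0))
      = ∑ c : S → Fin m, (∏ f, q f (c f)) * ∑ f : S, G f (c f) (c e₀) * x f.val :=
        Finset.sum_congr rfl fun c _ => step1 c
    _ = ∑ f : S, x f.val * ∑ c : S → Fin m, (∏ g, q g (c g)) * G f (c f) (c e₀) := by
        simp_rw [Finset.mul_sum]
        rw [Finset.sum_comm]
        refine Finset.sum_congr rfl fun f _ => Finset.sum_congr rfl fun c _ => by ring
    _ = ∑ f : S, x f.val * ∑ i, ∑ j, q f i * q e₀ j * G f i j := by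
        refine Finset.sum_congr rfl fun f _ => ?_
        rw [step2 f]
    _ = ∑ j, q e₀ j * ∑ i, ∑ f : S, x f.val * q f i * G f i j := by
        simp_rw [Finset.mul_sum]
        rw [swap13 (fun f i j => x f.val * (q f i * q e₀ j * G f i j))]
        exact Finset.sum_congr rfl fun j _ => Finset.sum_congr rfl fun i _ =>
          Finset.sum_congr rfl fun f _ => by ring
    _ ≤ ∑ j, q e₀ j * b :=
        Finset.sum_le_sum fun j _ => mul_le_mul_of_nonneg_left (hInner j) (hq0 e₀ j)
    _ = b := by rw [← Finset.sum_mul, hq1 e₀, one_mul]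
end

section
/- (Blocking set lemma, scaled outer version.) In the setting below with scaling parameter b ∈ (0,1], for every element e ∈ E with x_e > 0, the expected size of its blocking set intersected with R(x) satisfies E[ Σ_{f ∈ Γ(e)} 1[f ∈ R(x)] ] ≤ b, where the expectation is taken over the independent choices of critical indices and of the random set R(x). -/
open Finset

section Aux

variable {ι κ : Type*} [Fintype ι] [Fintype κ]

lemma aux_sum_prod [DecidableEq ι] (w : ι → κ → ℝ) (hw : ∀ i, ∑ k, w i k = 1) :
    ∑ c : ι → κ, ∏ i, w i (c i) = 1 := by
  rw [← Fintype.prod_sum]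
  simp [hw]

lemma aux_marg [DecidableEq ι] (w : ι → κ → ℝ)
    (hw : ∀ i, ∑ k, w i k = 1) (a : ι) (g : κ → ℝ) :
    ∑ c : ι → κ, (∏ i, w i (c i)) * g (c a) = ∑ k, w a k * g k := by
  classical
  have hsplit : ∀ p : κ × ({ j // j ≠ a } → κ),
      (∏ i, w i ((Equiv.funSplitAt a κ).symm p i)) *
        g ((Equiv.funSplitAt a κ).symm p a)
      = (w a p.1 * ∏ j : { j // j ≠ a }, w j.val (p.2 j)) * g p.1 := by
    intro p
    have hval : ∀ i : ι, (Equiv.funSplitAt a κ).symm p i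
        = if h : i = a then p.1 else p.2 ⟨i, h⟩ := by
      intro i; exact Equiv.funSplitAt_symm_apply a κ p i
    have ha : (Equiv.funSplitAt a κ).symm p a = p.1 := by rw [hval]; simp
    have hprod : (∏ i, w i ((Equiv.funSplitAt a κ).symm p i))
        = w a p.1 * ∏ j : { j // j ≠ a }, w j.val (p.2 j) := by
      rw [← Finset.mul_prod_erase Finset.univ _ (Finset.mem_univ a), ha]
      congr 1
      rw [Finset.prod_subtype (Finset.univ.erase a)
        (p := fun i => i ≠ a) (by simp) (fun i => w i ((Equiv.funSplitAt a κ).symm p i))]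
      refine Fintype.prod_congr _ _ fun j => ?_
      have hj' : (j : ι) ≠ a := j.2
      rw [hval]
      simp [hj']
    rw [hprod, ha]
  calc ∑ c : ι → κ, (∏ i, w i (c i)) * g (c a)
      = ∑ p : κ × ({ j // j ≠ a } → κ),
          (∏ i, w i ((Equiv.funSplitAt a κ).symm p i)) *
            g ((Equiv.funSplitAt a κ).symm p a) := by
        refine Fintype.sum_equiv (Equiv.funSplitAt a κ) _ _ fun c => ?_
        rw [Equiv.symm_apply_apply]
    _ = ∑ p : κ × ({ j // j ≠ a } → κ),
          (w a p.1 * ∏ j : { j // j ≠ a }, w j.val (p.2 j)) * g p.1 := by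
        exact Finset.sum_congr rfl fun p _ => hsplit p
    _ = ∑ k : κ, ∑ c' : { j // j ≠ a } → κ,
          (w a k * ∏ j : { j // j ≠ a }, w j.val (c' j)) * g k := by
        rw [Fintype.sum_prod_type]
    _ = ∑ k : κ, w a k * g k := by
        refine Finset.sum_congr rfl fun k _ => ?_
        have : ∑ c' : { j // j ≠ a } → κ, ∏ j : { j // j ≠ a }, w j.val (c' j) = 1 :=
          aux_sum_prod (ι := { j // j ≠ a }) (fun j k => w j.val k) (fun j => hw j.val)
        calc ∑ c' : { j // j ≠ a } → κ,
              (w a k * ∏ j : { j // j ≠ a }, w j.val (c' j)) * g k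
            = (w a k * g k) * ∑ c' : { j // j ≠ a } → κ,
                ∏ j : { j // j ≠ a }, w j.val (c' j) := by
              rw [Finset.mul_sum]; exact Finset.sum_congr rfl fun c' _ => by ring
          _ = w a k * g k := by rw [this, mul_one]

lemma aux_marg2 [DecidableEq ι] (w : ι → κ → ℝ)
    (hw : ∀ i, ∑ k, w i k = 1) (a a' : ι) (hne : a' ≠ a) (g : κ → κ → ℝ) :
    ∑ c : ι → κ, (∏ i, w i (c i)) * g (c a) (c a')
      = ∑ k, ∑ k', w a k * w a' k' * g k k' := by
  classical
  have hsplit : ∀ p : κ × ({ j // j ≠ a } → κ),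
      (∏ i, w i ((Equiv.funSplitAt a κ).symm p i)) *
        g ((Equiv.funSplitAt a κ).symm p a) ((Equiv.funSplitAt a κ).symm p a')
      = w a p.1 * ((∏ j : { j // j ≠ a }, w j.val (p.2 j)) * g p.1 (p.2 ⟨a', hne⟩)) := by
    intro p
    have hval : ∀ i : ι, (Equiv.funSplitAt a κ).symm p i
        = if h : i = a then p.1 else p.2 ⟨i, h⟩ := by
      intro i; exact Equiv.funSplitAt_symm_apply a κ p i
    have ha : (Equiv.funSplitAt a κ).symm p a = p.1 := by rw [hval]; simp
    have ha' : (Equiv.funSplitAt a κ).symm p a' = p.2 ⟨a', hne⟩ := by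
      rw [hval]; simp [hne]
    have hprod : (∏ i, w i ((Equiv.funSplitAt a κ).symm p i))
        = w a p.1 * ∏ j : { j // j ≠ a }, w j.val (p.2 j) := by
      rw [← Finset.mul_prod_erase Finset.univ _ (Finset.mem_univ a), ha]
      congr 1
      rw [Finset.prod_subtype (Finset.univ.erase a)
        (p := fun i => i ≠ a) (by simp) (fun i => w i ((Equiv.funSplitAt a κ).symm p i))]
      refine Fintype.prod_congr _ _ fun j => ?_
      have hj' : (j : ι) ≠ a := j.2
      rw [hval]
      simp [hj']
    rw [hprod, ha, ha', mul_assoc]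
  calc ∑ c : ι → κ, (∏ i, w i (c i)) * g (c a) (c a')
      = ∑ p : κ × ({ j // j ≠ a } → κ),
          (∏ i, w i ((Equiv.funSplitAt a κ).symm p i)) *
            g ((Equiv.funSplitAt a κ).symm p a) ((Equiv.funSplitAt a κ).symm p a') := by
        refine Fintype.sum_equiv (Equiv.funSplitAt a κ) _ _ fun c => ?_
        rw [Equiv.symm_apply_apply]
    _ = ∑ k : κ, ∑ c' : { j // j ≠ a } → κ,
          w a k * ((∏ j : { j // j ≠ a }, w j.val (c' j)) * g k (c' ⟨a', hne⟩)) := by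
        rw [Fintype.sum_prod_type]
        exact Finset.sum_congr rfl fun k _ =>
          Finset.sum_congr rfl fun c' _ => hsplit (k, c')
    _ = ∑ k, ∑ k', w a k * w a' k' * g k k' := by
        refine Finset.sum_congr rfl fun k _ => ?_
        have inner := aux_marg (ι := { j // j ≠ a }) (fun j k => w j.val k)
          (fun j => hw j.val) ⟨a', hne⟩ (fun k' => g k k')
        rw [← Finset.mul_sum, inner, Finset.mul_sum]
        exact Finset.sum_congr rfl fun k' _ => by ring

lemma aux_Tmarg {E : Type*} [Fintype E] [DecidableEq E] (x : E → ℝ) (f : E) :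
    ∑ T : Finset E, ((∏ g ∈ T, x g) * ∏ g ∈ Tᶜ, (1 - x g)) *
      (if f ∈ T then (1 : ℝ) else 0) = x f := by
  classical
  have key : ∀ T : Finset E,
      ((∏ g ∈ T, x g) * ∏ g ∈ Tᶜ, (1 - x g)) * (if f ∈ T then (1 : ℝ) else 0)
      = (∏ g ∈ T, x g) * ∏ g ∈ Tᶜ, (if g = f then 0 else 1 - x g) := by
    intro T
    by_cases hf : f ∈ T
    · have hfc : f ∉ Tᶜ := by simp [hf]
      rw [if_pos hf, mul_one]
      congr 1
      refine Finset.prod_congr rfl fun g hg => ?_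
      have : g ≠ f := fun h => hfc (h ▸ hg)
      rw [if_neg this]
    · have hfc : f ∈ Tᶜ := by simp [hf]
      rw [if_neg hf, mul_zero]
      rw [Finset.prod_eq_zero hfc (by rw [if_pos rfl]), mul_zero]
  rw [Finset.sum_congr rfl fun T _ => key T]
  rw [← Fintype.prod_add x (fun g => if g = f then 0 else 1 - x g)]
  have : ∀ g : E, x g + (if g = f then 0 else 1 - x g) = if g = f then x g else 1 := by
    intro g; by_cases h : g = f <;> simp [h]
  rw [Finset.prod_congr rfl fun g _ => this g]
  simp

end Aux

/-- **Blocking set lemma, scaled outer version.** With scaling parameter `b ∈ (0,1]`,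
suppose `(1/b)·x_e = Σ_{i : e ∈ B_i} β_i` over sets `B_1,…,B_m` with `Σ_i β_i = 1`,
with transversal mappings `φ[B_i, B_j]` hitting each `a ∈ B_j` at most once. Choose,
independently for each `e` with `x_e > 0`, a critical index `c(e)` with
`ℙ[c(e) = i] = b·β_i / x_e` (supported on `{i : e ∈ B_i}`), and independently include
each `f` in `T = R(x)` with probability `x_f`. Then the expected size of the blocking set
`Γ(e) = {f ≠ e : x_f > 0, φ[B_{c(f)}, B_{c(e)}](f) = e}` intersected with `R(x)` satisfies
`𝔼[Σ_{f ∈ Γ(e)} 1[f ∈ R(x)]] ≤ b`. -/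
theorem blocking_set_lemma_scaled_outer {E : Type*} [Fintype E] [DecidableEq E]
    (x : E → ℝ) (hx : ∀ e, x e ∈ Set.Icc (0 : ℝ) 1)
    (b : ℝ) (hb : b ∈ Set.Ioc (0 : ℝ) 1)
    (m : ℕ) (B : Fin m → Finset E) (β : Fin m → ℝ)
    (hβ : ∀ i, 0 ≤ β i) (hβsum : ∑ i, β i = 1)
    (hdecomp : ∀ e, (1 / b) * x e = ∑ i ∈ Finset.univ.filter (fun i => e ∈ B i), β i)
    (φ : Fin m → Fin m → E → Option E)
    (hφdom : ∀ i j, ∀ b' ∈ B i, ∀ a, φ i j b' = some a → a ∈ B j)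
    (hφinj : ∀ i j, ∀ a ∈ B j, ∀ b₁ ∈ B i, ∀ b₂ ∈ B i,
        φ i j b₁ = some a → φ i j b₂ = some a → b₁ = b₂)
    (e : E) (he : 0 < x e) :
    ∑ c : {f : E // 0 < x f} → Fin m,
      ∑ T : Finset E,
        ((∏ f : {f : E // 0 < x f},
            (if f.val ∈ B (c f) then b * β (c f) / x f.val else 0)) *
          ((∏ g ∈ T, x g) * ∏ g ∈ Tᶜ, (1 - x g))) *
        (∑ f : {f : E // 0 < x f},
          (if f.val ≠ e ∧ φ (c f) (c ⟨e, he⟩) f.val = some e ∧ f.val ∈ T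
           then (1 : ℝ) else 0)) ≤ b := by
  classical
  obtain ⟨hb0, hb1⟩ := hb
  set P := {f : E // 0 < x f} with hP
  set e₀ : P := ⟨e, he⟩ with he₀
  set w : P → Fin m → ℝ := fun f i => if f.val ∈ B i then b * β i / x f.val else 0 with hwdef
  have hw1 : ∀ f : P, ∑ i, w f i = 1 := by
    intro f
    have hxf : x f.val ≠ 0 := ne_of_gt f.2
    have hd := hdecomp f.val
    calc ∑ i, w f i
        = ∑ i ∈ Finset.univ.filter (fun i => f.val ∈ B i), b * β i / x f.val := by
          rw [Finset.sum_filter]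
      _ = (b / x f.val) * ∑ i ∈ Finset.univ.filter (fun i => f.val ∈ B i), β i := by
          rw [Finset.mul_sum]; exact Finset.sum_congr rfl fun i _ => by ring
      _ = (b / x f.val) * ((1 / b) * x f.val) := by rw [← hd]
      _ = 1 := by field_simp
  have hw0 : ∀ (f : P) (i : Fin m), 0 ≤ w f i := by
    intro f i
    simp only [hwdef]
    by_cases h : f.val ∈ B i
    · rw [if_pos h]
      exact div_nonneg (mul_nonneg (le_of_lt hb0) (hβ i)) (le_of_lt f.2)
    · rw [if_neg h]
  -- step 1: reduce to the c-marginal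
  have step1 :
      (∑ c : P → Fin m, ∑ T : Finset E,
        ((∏ f : P, w f (c f)) * ((∏ g ∈ T, x g) * ∏ g ∈ Tᶜ, (1 - x g))) *
        (∑ f : P, (if f.val ≠ e ∧ φ (c f) (c e₀) f.val = some e ∧ f.val ∈ T
           then (1 : ℝ) else 0)))
      = ∑ f : P, x f.val * ∑ c : P → Fin m, (∏ f' : P, w f' (c f')) *
          (if f.val ≠ e ∧ φ (c f) (c e₀) f.val = some e then (1 : ℝ) else 0) := by
    have inner : ∀ (c : P → Fin m) (f : P),
        ∑ T : Finset E,
          ((∏ f' : P, w f' (c f')) * ((∏ g ∈ T, x g) * ∏ g ∈ Tᶜ, (1 - x g))) *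
          (if f.val ≠ e ∧ φ (c f) (c e₀) f.val = some e ∧ f.val ∈ T then (1:ℝ) else 0)
        = ((∏ f' : P, w f' (c f')) *
            (if f.val ≠ e ∧ φ (c f) (c e₀) f.val = some e then (1:ℝ) else 0)) * x f.val := by
      intro c f
      have hsplit : ∀ T : Finset E,
          (if f.val ≠ e ∧ φ (c f) (c e₀) f.val = some e ∧ f.val ∈ T then (1:ℝ) else 0)
          = (if f.val ≠ e ∧ φ (c f) (c e₀) f.val = some e then (1:ℝ) else 0) *
            (if f.val ∈ T then (1:ℝ) else 0) := by
        intro T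
        by_cases h1 : f.val ≠ e ∧ φ (c f) (c e₀) f.val = some e
        · by_cases h2 : f.val ∈ T
          · rw [if_pos ⟨h1.1, h1.2, h2⟩, if_pos h1, if_pos h2, mul_one]
          · have hn : ¬(f.val ≠ e ∧ φ (c f) (c e₀) f.val = some e ∧ f.val ∈ T) :=
              fun h => h2 h.2.2
            rw [if_neg hn, if_pos h1, if_neg h2, mul_zero]
        · have hn : ¬(f.val ≠ e ∧ φ (c f) (c e₀) f.val = some e ∧ f.val ∈ T) :=
            fun h => h1 ⟨h.1, h.2.1⟩
          rw [if_neg hn, if_neg h1, zero_mul]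
      calc ∑ T : Finset E,
            ((∏ f' : P, w f' (c f')) * ((∏ g ∈ T, x g) * ∏ g ∈ Tᶜ, (1 - x g))) *
            (if f.val ≠ e ∧ φ (c f) (c e₀) f.val = some e ∧ f.val ∈ T then (1:ℝ) else 0)
          = ((∏ f' : P, w f' (c f')) *
              (if f.val ≠ e ∧ φ (c f) (c e₀) f.val = some e then (1:ℝ) else 0)) *
            ∑ T : Finset E, ((∏ g ∈ T, x g) * ∏ g ∈ Tᶜ, (1 - x g)) *
              (if f.val ∈ T then (1:ℝ) else 0) := by
            rw [Finset.mul_sum]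
            exact Finset.sum_congr rfl fun T _ => by rw [hsplit T]; ring
        _ = _ := by rw [aux_Tmarg x f.val]
    calc ∑ c : P → Fin m, ∑ T : Finset E,
          ((∏ f : P, w f (c f)) * ((∏ g ∈ T, x g) * ∏ g ∈ Tᶜ, (1 - x g))) *
          (∑ f : P, (if f.val ≠ e ∧ φ (c f) (c e₀) f.val = some e ∧ f.val ∈ T
             then (1 : ℝ) else 0))
        = ∑ c : P → Fin m, ∑ f : P, ∑ T : Finset E,
            ((∏ f' : P, w f' (c f')) * ((∏ g ∈ T, x g) * ∏ g ∈ Tᶜ, (1 - x g))) *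
            (if f.val ≠ e ∧ φ (c f) (c e₀) f.val = some e ∧ f.val ∈ T then (1:ℝ) else 0) := by
          refine Finset.sum_congr rfl fun c _ => ?_
          rw [Finset.sum_comm]
          exact Finset.sum_congr rfl fun T _ => by rw [Finset.mul_sum]
      _ = ∑ f : P, ∑ c : P → Fin m,
            ((∏ f' : P, w f' (c f')) *
              (if f.val ≠ e ∧ φ (c f) (c e₀) f.val = some e then (1:ℝ) else 0)) * x f.val := by
          rw [Finset.sum_comm]
          exact Finset.sum_congr rfl fun f _ =>
            Finset.sum_congr rfl fun c _ => inner c f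
      _ = _ := by
          refine Finset.sum_congr rfl fun f _ => ?_
          rw [← Finset.sum_mul, mul_comm]
  -- step 2: the (c f, c e₀)-marginal
  have step2 : ∀ f : P,
      ∑ c : P → Fin m, (∏ f' : P, w f' (c f')) *
          (if f.val ≠ e ∧ φ (c f) (c e₀) f.val = some e then (1 : ℝ) else 0)
      = ∑ i, ∑ j, w f i * w e₀ j *
          (if f.val ≠ e ∧ φ i j f.val = some e then (1 : ℝ) else 0) := by
    intro f
    by_cases hfe : f = e₀
    · subst hfe
      simp [he₀]
    · have hne : e₀ ≠ f := fun h => hfe h.symm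
      exact aux_marg2 w hw1 f e₀ hne
        (fun i j => if f.val ≠ e ∧ φ i j f.val = some e then (1:ℝ) else 0)
  -- step 3: rearrange and bound
  have key : ∀ j : Fin m, e ∈ B j →
      (∑ i, ∑ f : P, x f.val * (w f i *
        (if f.val ≠ e ∧ φ i j f.val = some e then (1:ℝ) else 0))) ≤ b := by
    intro j hej
    have per_i : ∀ i : Fin m,
        ∑ f : P, x f.val * (w f i *
          (if f.val ≠ e ∧ φ i j f.val = some e then (1:ℝ) else 0)) ≤ b * β i := by
      intro i
      have hterm : ∀ f : P,
          x f.val * (w f i * (if f.val ≠ e ∧ φ i j f.val = some e then (1:ℝ) else 0))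
          = if f.val ∈ B i ∧ f.val ≠ e ∧ φ i j f.val = some e then b * β i else 0 := by
        intro f
        have hxf : x f.val ≠ 0 := ne_of_gt f.2
        simp only [hwdef]
        by_cases h1 : f.val ∈ B i
        · by_cases h2 : f.val ≠ e ∧ φ i j f.val = some e
          · rw [if_pos h1, if_pos h2, if_pos ⟨h1, h2⟩]
            field_simp
          · have hn : ¬(f.val ∈ B i ∧ f.val ≠ e ∧ φ i j f.val = some e) :=
              fun h => h2 ⟨h.2.1, h.2.2⟩
            rw [if_neg h2, if_neg hn, mul_zero, mul_zero]
        · have hn : ¬(f.val ∈ B i ∧ f.val ≠ e ∧ φ i j f.val = some e) :=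
            fun h => h1 h.1
          rw [if_neg h1, if_neg hn, zero_mul, mul_zero]
      rw [Finset.sum_congr rfl fun f _ => hterm f]
      rw [Finset.sum_ite, Finset.sum_const, Finset.sum_const_zero, add_zero]
      have hcard : (Finset.univ.filter
          (fun f : P => f.val ∈ B i ∧ f.val ≠ e ∧ φ i j f.val = some e)).card ≤ 1 := by
        apply Finset.card_le_one.mpr
        intro f₁ h₁ f₂ h₂
        simp only [Finset.mem_filter] at h₁ h₂
        exact Subtype.ext (hφinj i j e hej f₁.val h₁.2.1 f₂.val h₂.2.1 h₁.2.2.2 h₂.2.2.2)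
      have hbβ : (0:ℝ) ≤ b * β i := mul_nonneg (le_of_lt hb0) (hβ i)
      calc (Finset.univ.filter
            (fun f : P => f.val ∈ B i ∧ f.val ≠ e ∧ φ i j f.val = some e)).card • (b * β i)
          = ((Finset.univ.filter
            (fun f : P => f.val ∈ B i ∧ f.val ≠ e ∧ φ i j f.val = some e)).card : ℝ)
              * (b * β i) := by rw [nsmul_eq_mul]
        _ ≤ 1 * (b * β i) := by
            apply mul_le_mul_of_nonneg_right _ hbβ
            exact_mod_cast hcard
        _ = b * β i := one_mul _
    calc ∑ i, ∑ f : P, x f.val * (w f i *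
          (if f.val ≠ e ∧ φ i j f.val = some e then (1:ℝ) else 0))
        ≤ ∑ i, b * β i := Finset.sum_le_sum fun i _ => per_i i
      _ = b := by rw [← Finset.mul_sum, hβsum, mul_one]
  calc ∑ c : P → Fin m, ∑ T : Finset E,
        ((∏ f : P, w f (c f)) * ((∏ g ∈ T, x g) * ∏ g ∈ Tᶜ, (1 - x g))) *
        (∑ f : P, (if f.val ≠ e ∧ φ (c f) (c e₀) f.val = some e ∧ f.val ∈ T
           then (1 : ℝ) else 0))
      = ∑ f : P, x f.val * ∑ i, ∑ j, w f i * w e₀ j *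
          (if f.val ≠ e ∧ φ i j f.val = some e then (1 : ℝ) else 0) := by
        rw [step1]
        exact Finset.sum_congr rfl fun f _ => by rw [step2 f]
    _ = ∑ j, w e₀ j * ∑ i, ∑ f : P, x f.val * (w f i *
          (if f.val ≠ e ∧ φ i j f.val = some e then (1 : ℝ) else 0)) := by
        calc ∑ f : P, x f.val * ∑ i, ∑ j, w f i * w e₀ j *
              (if f.val ≠ e ∧ φ i j f.val = some e then (1 : ℝ) else 0)
            = ∑ f : P, ∑ i, ∑ j, x f.val * (w f i * w e₀ j *
                (if f.val ≠ e ∧ φ i j f.val = some e then (1 : ℝ) else 0)) := by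
              simp only [Finset.mul_sum]
          _ = ∑ i, ∑ f : P, ∑ j, x f.val * (w f i * w e₀ j *
                (if f.val ≠ e ∧ φ i j f.val = some e then (1 : ℝ) else 0)) :=
              Finset.sum_comm
          _ = ∑ i, ∑ j, ∑ f : P, x f.val * (w f i * w e₀ j *
                (if f.val ≠ e ∧ φ i j f.val = some e then (1 : ℝ) else 0)) :=
              Finset.sum_congr rfl fun i _ => Finset.sum_comm
          _ = ∑ j, ∑ i, ∑ f : P, x f.val * (w f i * w e₀ j *
                (if f.val ≠ e ∧ φ i j f.val = some e then (1 : ℝ) else 0)) :=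
              Finset.sum_comm
          _ = ∑ j, w e₀ j * ∑ i, ∑ f : P, x f.val * (w f i *
                (if f.val ≠ e ∧ φ i j f.val = some e then (1 : ℝ) else 0)) := by
              refine Finset.sum_congr rfl fun j _ => ?_
              simp only [Finset.mul_sum]
              exact Finset.sum_congr rfl fun i _ =>
                Finset.sum_congr rfl fun f _ => by ring
    _ ≤ ∑ j, w e₀ j * b := by
        refine Finset.sum_le_sum fun j _ => ?_
        by_cases hej : e ∈ B j
        · exact mul_le_mul_of_nonneg_left (key j hej) (hw0 e₀ j)
        · have : w e₀ j = 0 := by simp [hwdef, he₀, hej]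
          rw [this, zero_mul, zero_mul]
    _ = b := by rw [← Finset.sum_mul, hw1 e₀, one_mul]
end

section
/- (Blocking bound for k-set packing.) In the setting below, for every element e ∈ E, E[ Σ_{j ∈ C_e} Σ_{f ∈ Γ_j(e)} p^j_f · 1[f ∈ R(x)] ] ≤ k, where the expectation is taken over the independent per-row critical choices and the random set R(x). -/
open Finset

section helpers
variable {E : Type*} [Fintype E] [DecidableEq E]

lemma sum_T_one (x : E → ℝ) :
    ∑ T : Finset E, (∏ g ∈ T, x g) * ∏ g ∈ Tᶜ, (1 - x g) = 1 := by
  rw [← Fintype.prod_add]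
  simp

lemma sum_T_mem (x : E → ℝ) (f : E) :
    ∑ T : Finset E, ((∏ g ∈ T, x g) * ∏ g ∈ Tᶜ, (1 - x g)) * (if f ∈ T then (1:ℝ) else 0)
      = x f := by
  have h : ∀ T : Finset E,
      ((∏ g ∈ T, x g) * ∏ g ∈ Tᶜ, (1 - x g)) * (if f ∈ T then (1:ℝ) else 0)
      = (∏ g ∈ T, x g) * ∏ g ∈ Tᶜ, (if g = f then 0 else 1 - x g) := by
    intro T
    by_cases hf : f ∈ T
    · rw [if_pos hf, mul_one]
      congr 1
      refine Finset.prod_congr rfl fun g hg => ?_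
      rw [if_neg]
      rintro rfl
      exact (Finset.mem_compl.mp hg) hf
    · rw [if_neg hf, mul_zero]
      have : (∏ g ∈ Tᶜ, (if g = f then (0:ℝ) else 1 - x g)) = 0 :=
        Finset.prod_eq_zero (Finset.mem_compl.mpr hf) (if_pos rfl)
      rw [this, mul_zero]
  rw [Finset.sum_congr rfl fun T _ => h T, ← Fintype.prod_add]
  rw [Finset.prod_eq_single f (fun b _ hb => by simp [hb]) (by simp)]
  simp

lemma pi_marg {ι : Type*} [Fintype ι] [DecidableEq ι] {τ : ι → Type*} [∀ i, Fintype (τ i)]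
    (F : ∀ i, τ i → ℝ) (hF : ∀ i, ∑ t, F i t = 1) (j0 : ι) (H : τ j0 → ℝ) :
    ∑ c : ∀ i, τ i, (∏ i, F i (c i)) * H (c j0) = ∑ t, F j0 t * H t := by
  have key : ∀ c : ∀ i, τ i, (∏ i, F i (c i)) * H (c j0)
      = ∏ i, (F i (c i) * if h : i = j0 then H (h ▸ c i) else 1) := by
    intro c
    rw [Finset.prod_mul_distrib]
    congr 1
    rw [Finset.prod_eq_single j0 (fun b _ hb => by simp [hb]) (by simp)]
    simp
  rw [Finset.sum_congr rfl fun c _ => key c,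
    ← Fintype.prod_sum (fun i (t : τ i) => F i t * if h : i = j0 then H (h ▸ t) else 1)]
  rw [Finset.prod_eq_single j0 (fun b _ hb => by simp [hb, hF b]) (by simp [hF j0])]
  simp

lemma fun_marg2 {ι κ : Type*} [Fintype ι] [DecidableEq ι] [Fintype κ] [DecidableEq κ]
    (F : ι → κ → ℝ) (hF : ∀ i, ∑ t, F i t = 1) (a b : ι) (hab : a ≠ b) (H : κ → κ → ℝ) :
    ∑ c : ι → κ, (∏ i, F i (c i)) * H (c a) (c b)
      = ∑ t, ∑ t', F a t * F b t' * H t t' := by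
  set G : κ → κ → ι → κ → ℝ := fun t t' i s =>
    F i s * (if i = a then (if s = t then 1 else 0) else 1)
      * (if i = b then (if s = t' then 1 else 0) else 1) with hG
  have hfac : ∀ (c : ι → κ) t t', (∏ i, G t t' i (c i))
      = (∏ i, F i (c i)) * (if c a = t then 1 else 0) * (if c b = t' then 1 else 0) := by
    intro c t t'
    rw [hG]
    simp only []
    rw [Finset.prod_mul_distrib, Finset.prod_mul_distrib]
    congr 2
    · rw [Finset.prod_eq_single a (fun i _ hi => by simp [hi]) (by simp)]; simp
    · rw [Finset.prod_eq_single b (fun i _ hi => by simp [hi]) (by simp)]; simp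
  have key : ∀ c : ι → κ, (∏ i, F i (c i)) * H (c a) (c b)
      = ∑ t, ∑ t', (∏ i, G t t' i (c i)) * H t t' := by
    intro c
    simp_rw [hfac]
    rw [Finset.sum_eq_single (c a)
      (fun t _ ht => Finset.sum_eq_zero fun t' _ => by simp [Ne.symm ht])
      (fun h => absurd (Finset.mem_univ _) h)]
    rw [Finset.sum_eq_single (c b)
      (fun t' _ ht' => by simp [Ne.symm ht'])
      (fun h => absurd (Finset.mem_univ _) h)]
    simp
  have hprod : ∀ t t', (∏ i, ∑ s, G t t' i s) = F a t * F b t' := by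
    intro t t'
    have h1 : ∀ i, (∑ s, G t t' i s)
        = (if i = a then F a t else 1) * (if i = b then F b t' else 1) := by
      intro i
      by_cases hia : i = a
      · subst hia
        rw [if_pos rfl, if_neg hab]
        rw [hG]
        simp only [if_pos rfl, if_neg hab]
        rw [Finset.sum_eq_single t (fun s _ hs => by simp [hs]) (by simp)]
        simp
      · by_cases hib : i = b
        · subst hib
          rw [if_neg hia, if_pos rfl, one_mul, hG]
          simp only [if_neg hia, if_pos rfl]
          rw [Finset.sum_eq_single t' (fun s _ hs => by simp [hs]) (by simp)]
          simp
        · rw [if_neg hia, if_neg hib, one_mul, hG]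
          simp only [if_neg hia, if_neg hib]
          simpa using hF i
    rw [Finset.prod_congr rfl fun i _ => h1 i, Finset.prod_mul_distrib]
    congr 1
    · rw [Finset.prod_eq_single a (fun i _ hi => by simp [hi]) (by simp)]; simp
    · rw [Finset.prod_eq_single b (fun i _ hi => by simp [hi]) (by simp)]; simp
  calc ∑ c : ι → κ, (∏ i, F i (c i)) * H (c a) (c b)
      = ∑ c : ι → κ, ∑ t, ∑ t', (∏ i, G t t' i (c i)) * H t t' :=
        Finset.sum_congr rfl fun c _ => key c
    _ = ∑ t, ∑ t', (∑ c : ι → κ, ∏ i, G t t' i (c i)) * H t t' := by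
        rw [Finset.sum_comm]
        refine Finset.sum_congr rfl fun t _ => ?_
        rw [Finset.sum_comm]
        refine Finset.sum_congr rfl fun t' _ => ?_
        rw [Finset.sum_mul]
    _ = ∑ t, ∑ t', F a t * F b t' * H t t' := by
        refine Finset.sum_congr rfl fun t _ => Finset.sum_congr rfl fun t' _ => ?_
        rw [← Fintype.prod_sum (G t t'), hprod]

end helpers

/-- **Blocking bound for `k`-set packing.** For each row `j ∈ [d]` the vector `p^j·x`
decomposes as `p^j_e x_e = Σ_{i : e ∈ B^j_i} β^j_i` with `Σ_i β^j_i = 1`, and there are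
transversal mappings `φ^j[B^j_i, B^j_{i'}]` hitting each `a ∈ B^j_{i'}` at most once.
Each element `e` has a set `C_e` of at most `k` rows, outside of which `p^j_e = 0`.
Independently for each row `j` and each `e` with `p^j_e x_e > 0`, a critical index `c^j(e)`
is chosen with `ℙ[c^j(e) = i] = β^j_i/(p^j_e x_e)` (supported on `{i : e ∈ B^j_i}`), and
independently each `f` is included in `T = R(x)` with probability `x_f`. Then, with
`Γ_j(e) = {f ≠ e : p^j_f x_f > 0, p^j_e x_e > 0, φ^j[B^j_{c^j(f)}, B^j_{c^j(e)}](f) = e}`,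
`𝔼[ Σ_{j ∈ C_e} Σ_{f ∈ Γ_j(e)} p^j_f · 1[f ∈ R(x)] ] ≤ k`. -/
theorem blocking_bound_k_set_packing {E : Type*} [Fintype E] [DecidableEq E]
    (x : E → ℝ) (hx : ∀ e, x e ∈ Set.Icc (0 : ℝ) 1)
    (d k : ℕ) (hd : 0 < d) (hk : 0 < k)
    (p : Fin d → E → ℝ) (hp : ∀ j e, p j e ∈ Set.Icc (0 : ℝ) 1)
    (C : E → Finset (Fin d)) (hCk : ∀ e, (C e).card ≤ k)
    (hCp : ∀ e : E, ∀ j ∉ C e, p j e = 0)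
    (m : Fin d → ℕ)
    (B : (j : Fin d) → Fin (m j) → Finset E)
    (β : (j : Fin d) → Fin (m j) → ℝ)
    (hβ : ∀ j i, 0 ≤ β j i) (hβsum : ∀ j, ∑ i, β j i = 1)
    (hdecomp : ∀ j e, p j e * x e = ∑ i ∈ Finset.univ.filter (fun i => e ∈ B j i), β j i)
    (φ : (j : Fin d) → Fin (m j) → Fin (m j) → E → Option E)
    (hφdom : ∀ j i i', ∀ b ∈ B j i, ∀ a, φ j i i' b = some a → a ∈ B j i')
    (hφinj : ∀ j i i', ∀ a ∈ B j i', ∀ b₁ ∈ B j i, ∀ b₂ ∈ B j i,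
        φ j i i' b₁ = some a → φ j i i' b₂ = some a → b₁ = b₂)
    (e : E) :
    ∑ c : (j : Fin d) → {f : E // 0 < p j f * x f} → Fin (m j),
      ∑ T : Finset E,
        ((∏ j : Fin d, ∏ f : {f : E // 0 < p j f * x f},
            (if f.val ∈ B j (c j f) then β j (c j f) / (p j f.val * x f.val) else 0)) *
          ((∏ g ∈ T, x g) * ∏ g ∈ Tᶜ, (1 - x g))) *
        (∑ j ∈ C e,
          if he : 0 < p j e * x e then
            ∑ f : {f : E // 0 < p j f * x f},
              (if f.val ≠ e ∧ φ j (c j f) (c j ⟨e, he⟩) f.val = some e ∧ f.val ∈ T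
               then p j f.val else 0)
          else 0) ≤ (k : ℝ) := by
  classical
  -- weights of critical choices sum to 1
  have hwt_sum : ∀ (j : Fin d) (f : {f : E // 0 < p j f * x f}),
      ∑ i, (if f.val ∈ B j i then β j i / (p j f.val * x f.val) else 0) = 1 := by
    intro j f
    rw [← Finset.sum_filter, ← Finset.sum_div, ← hdecomp j f.val]
    exact div_self (ne_of_gt f.2)
  have hWsum : ∀ j : Fin d,
      ∑ cf : {f : E // 0 < p j f * x f} → Fin (m j),
        (∏ f : {f : E // 0 < p j f * x f},
          (if f.val ∈ B j (cf f) then β j (cf f) / (p j f.val * x f.val) else 0)) = 1 := by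
    intro j
    rw [← Fintype.prod_sum (fun (f : {f : E // 0 < p j f * x f}) i =>
      if f.val ∈ B j i then β j i / (p j f.val * x f.val) else 0)]
    exact Finset.prod_eq_one fun f _ => hwt_sum j f
  -- per-row bound
  have rowbound : ∀ j ∈ C e,
      (∑ c : (j' : Fin d) → {f : E // 0 < p j' f * x f} → Fin (m j'),
        ∑ T : Finset E,
          ((∏ j' : Fin d, ∏ f : {f : E // 0 < p j' f * x f},
              (if f.val ∈ B j' (c j' f) then β j' (c j' f) / (p j' f.val * x f.val) else 0)) *
            ((∏ g ∈ T, x g) * ∏ g ∈ Tᶜ, (1 - x g))) *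
          (if he : 0 < p j e * x e then
            ∑ f : {f : E // 0 < p j f * x f},
              (if f.val ≠ e ∧ φ j (c j f) (c j ⟨e, he⟩) f.val = some e ∧ f.val ∈ T
               then p j f.val else 0)
          else 0)) ≤ 1 := by
    intro j _
    by_cases he : 0 < p j e * x e
    · simp only [dif_pos he]
      -- Step 1: integrate out T
      have stepT : ∀ c : (j' : Fin d) → {f : E // 0 < p j' f * x f} → Fin (m j'),
          ∑ T : Finset E,
            ((∏ j' : Fin d, ∏ f : {f : E // 0 < p j' f * x f},
                (if f.val ∈ B j' (c j' f) then β j' (c j' f) / (p j' f.val * x f.val) else 0)) *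
              ((∏ g ∈ T, x g) * ∏ g ∈ Tᶜ, (1 - x g))) *
            (∑ f : {f : E // 0 < p j f * x f},
              (if f.val ≠ e ∧ φ j (c j f) (c j ⟨e, he⟩) f.val = some e ∧ f.val ∈ T
               then p j f.val else 0))
          = (∏ j' : Fin d, ∏ f : {f : E // 0 < p j' f * x f},
                (if f.val ∈ B j' (c j' f) then β j' (c j' f) / (p j' f.val * x f.val) else 0)) *
            (∑ f : {f : E // 0 < p j f * x f},
              (if f.val ≠ e ∧ φ j (c j f) (c j ⟨e, he⟩) f.val = some e
               then p j f.val * x f.val else 0)) := by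
        intro c
        rw [Finset.sum_congr rfl fun T (_ : T ∈ (Finset.univ : Finset (Finset E))) =>
          mul_assoc _ ((∏ g ∈ T, x g) * ∏ g ∈ Tᶜ, (1 - x g)) _]
        rw [← Finset.mul_sum]
        congr 1
        simp_rw [Finset.mul_sum]
        rw [Finset.sum_comm]
        refine Finset.sum_congr rfl fun f _ => ?_
        have hsplit : ∀ T : Finset E,
            ((∏ g ∈ T, x g) * ∏ g ∈ Tᶜ, (1 - x g)) *
              (if f.val ≠ e ∧ φ j (c j f) (c j ⟨e, he⟩) f.val = some e ∧ f.val ∈ T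
               then p j f.val else 0)
            = (((∏ g ∈ T, x g) * ∏ g ∈ Tᶜ, (1 - x g)) * (if f.val ∈ T then (1:ℝ) else 0)) *
              (if f.val ≠ e ∧ φ j (c j f) (c j ⟨e, he⟩) f.val = some e
               then p j f.val else 0) := by
          intro T
          by_cases h1 : f.val ≠ e <;>
            by_cases h2 : φ j (c j f) (c j ⟨e, he⟩) f.val = some e <;>
            by_cases h3 : f.val ∈ T <;> simp [h1, h2, h3]
        rw [Finset.sum_congr rfl fun T _ => hsplit T, ← Finset.sum_mul, sum_T_mem x f.val]
        by_cases h1 : f.val ≠ e <;>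
          by_cases h2 : φ j (c j f) (c j ⟨e, he⟩) f.val = some e <;>
          simp [h1, h2, mul_comm]
      -- Step 2: key identity for a fixed element f
      have keyf : ∀ f : {f : E // 0 < p j f * x f},
          ∑ cf : {f : E // 0 < p j f * x f} → Fin (m j),
            (∏ g : {f : E // 0 < p j f * x f},
              (if g.val ∈ B j (cf g) then β j (cf g) / (p j g.val * x g.val) else 0)) *
            (if f.val ≠ e ∧ φ j (cf f) (cf ⟨e, he⟩) f.val = some e
             then p j f.val * x f.val else 0)
          = ∑ i', ∑ i, (if e ∈ B j i' then β j i' / (p j e * x e) else 0) *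
              (if f.val ≠ e ∧ φ j i i' f.val = some e ∧ f.val ∈ B j i then β j i else 0) := by
        intro f
        by_cases hfe : f.val = e
        · simp [hfe]
        · have hne : f ≠ (⟨e, he⟩ : {f : E // 0 < p j f * x f}) := by
            intro h
            exact hfe (congrArg Subtype.val h)
          calc ∑ cf : {f : E // 0 < p j f * x f} → Fin (m j),
              (∏ g : {f : E // 0 < p j f * x f},
                (if g.val ∈ B j (cf g) then β j (cf g) / (p j g.val * x g.val) else 0)) *
              (if f.val ≠ e ∧ φ j (cf f) (cf ⟨e, he⟩) f.val = some e
               then p j f.val * x f.val else 0)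
              = ∑ cf : {f : E // 0 < p j f * x f} → Fin (m j),
                (∏ g : {f : E // 0 < p j f * x f},
                  (if g.val ∈ B j (cf g) then β j (cf g) / (p j g.val * x g.val) else 0)) *
                (if φ j (cf f) (cf ⟨e, he⟩) f.val = some e
                 then p j f.val * x f.val else 0) :=
                Finset.sum_congr rfl fun cf _ => by simp [hfe]
            _ = ∑ i, ∑ i', (if f.val ∈ B j i then β j i / (p j f.val * x f.val) else 0) *
                  (if e ∈ B j i' then β j i' / (p j e * x e) else 0) *
                  (if φ j i i' f.val = some e then p j f.val * x f.val else 0) :=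
                fun_marg2 (fun (g : {f : E // 0 < p j f * x f}) i =>
                    if g.val ∈ B j i then β j i / (p j g.val * x g.val) else 0)
                  (hwt_sum j) f ⟨e, he⟩ hne
                  (fun i i' => if φ j i i' f.val = some e then p j f.val * x f.val else 0)
            _ = ∑ i, ∑ i', (if e ∈ B j i' then β j i' / (p j e * x e) else 0) *
                  (if f.val ≠ e ∧ φ j i i' f.val = some e ∧ f.val ∈ B j i
                   then β j i else 0) := by
                refine Finset.sum_congr rfl fun i _ => Finset.sum_congr rfl fun i' _ => ?_
                by_cases hb : f.val ∈ B j i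
                · by_cases hphi : φ j i i' f.val = some e
                  · have hcond : (f.val ≠ e ∧ φ j i i' f.val = some e ∧ f.val ∈ B j i) :=
                      ⟨hfe, hphi, hb⟩
                    rw [if_pos hb, if_pos hphi, if_pos hcond]
                    have hq : p j f.val * x f.val ≠ 0 := ne_of_gt f.2
                    field_simp
                    have key : p j ↑f * x ↑f * (p j ↑f)⁻¹ * (x ↑f)⁻¹ = 1 := by
                      rw [mul_assoc (p j ↑f * x ↑f), ← mul_inv, mul_inv_cancel₀ hq]
                    linear_combination
                      (β j i * (if e ∈ B j i' then β j i' / (p j e * x e) else 0)) * key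
                  · simp [hphi]
                · simp [hb]
            _ = ∑ i', ∑ i, (if e ∈ B j i' then β j i' / (p j e * x e) else 0) *
                  (if f.val ≠ e ∧ φ j i i' f.val = some e ∧ f.val ∈ B j i
                   then β j i else 0) := Finset.sum_comm
      -- Step 3: the final numeric bound
      have hwtE : ∑ i', (if e ∈ B j i' then β j i' / (p j e * x e) else 0) = 1 := by
        rw [← Finset.sum_filter, ← Finset.sum_div, ← hdecomp j e]
        exact div_self (ne_of_gt he)
      have hfinal : ∑ i', (if e ∈ B j i' then β j i' / (p j e * x e) else 0) *
            (∑ i, ∑ f : {f : E // 0 < p j f * x f},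
              (if f.val ≠ e ∧ φ j i i' f.val = some e ∧ f.val ∈ B j i then β j i else 0))
          ≤ 1 := by
        have hY : ∀ i', (∑ i, ∑ f : {f : E // 0 < p j f * x f},
            (if f.val ≠ e ∧ φ j i i' f.val = some e ∧ f.val ∈ B j i then β j i else 0)) ≤ 1 := by
          intro i'
          refine le_trans (Finset.sum_le_sum fun i _ => ?_) (le_of_eq (hβsum j))
          rw [← Finset.sum_filter, Finset.sum_const, nsmul_eq_mul]
          have hc : (Finset.univ.filter fun f : {f : E // 0 < p j f * x f} =>
              (f.val ≠ e ∧ φ j i i' f.val = some e ∧ f.val ∈ B j i)).card ≤ 1 := by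
            refine Finset.card_le_one.mpr fun f1 h1 f2 h2 => ?_
            simp only [Finset.mem_filter, Finset.mem_univ, true_and] at h1 h2
            have heB : e ∈ B j i' := hφdom j i i' f1.val h1.2.2 e h1.2.1
            exact Subtype.ext (hφinj j i i' e heB f1.val h1.2.2 f2.val h2.2.2 h1.2.1 h2.2.1)
          calc ((Finset.univ.filter fun f : {f : E // 0 < p j f * x f} =>
                (f.val ≠ e ∧ φ j i i' f.val = some e ∧ f.val ∈ B j i)).card : ℝ) * β j i
              ≤ 1 * β j i := by
                apply mul_le_mul_of_nonneg_right _ (hβ j i)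
                exact_mod_cast hc
            _ = β j i := one_mul _
        calc ∑ i', (if e ∈ B j i' then β j i' / (p j e * x e) else 0) *
              (∑ i, ∑ f : {f : E // 0 < p j f * x f},
                (if f.val ≠ e ∧ φ j i i' f.val = some e ∧ f.val ∈ B j i then β j i else 0))
            ≤ ∑ i', (if e ∈ B j i' then β j i' / (p j e * x e) else 0) * 1 := by
              refine Finset.sum_le_sum fun i' _ => mul_le_mul_of_nonneg_left (hY i') ?_
              by_cases hbb : e ∈ B j i'
              · simp only [if_pos hbb]
                exact div_nonneg (hβ j i') he.le
              · simp [hbb]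
          _ = 1 := by
              simp only [mul_one]
              exact hwtE
      -- assemble
      calc ∑ c : (j' : Fin d) → {f : E // 0 < p j' f * x f} → Fin (m j'),
            ∑ T : Finset E,
              ((∏ j' : Fin d, ∏ f : {f : E // 0 < p j' f * x f},
                  (if f.val ∈ B j' (c j' f) then β j' (c j' f) / (p j' f.val * x f.val) else 0)) *
                ((∏ g ∈ T, x g) * ∏ g ∈ Tᶜ, (1 - x g))) *
              (∑ f : {f : E // 0 < p j f * x f},
                (if f.val ≠ e ∧ φ j (c j f) (c j ⟨e, he⟩) f.val = some e ∧ f.val ∈ T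
                 then p j f.val else 0))
          = ∑ c : (j' : Fin d) → {f : E // 0 < p j' f * x f} → Fin (m j'),
              (∏ j' : Fin d, ∏ f : {f : E // 0 < p j' f * x f},
                  (if f.val ∈ B j' (c j' f) then β j' (c j' f) / (p j' f.val * x f.val) else 0)) *
              (∑ f : {f : E // 0 < p j f * x f},
                (if f.val ≠ e ∧ φ j (c j f) (c j ⟨e, he⟩) f.val = some e
                 then p j f.val * x f.val else 0)) :=
            Finset.sum_congr rfl fun c _ => stepT c
        _ = ∑ cf : {f : E // 0 < p j f * x f} → Fin (m j),
              (∏ g : {f : E // 0 < p j f * x f},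
                (if g.val ∈ B j (cf g) then β j (cf g) / (p j g.val * x g.val) else 0)) *
              (∑ f : {f : E // 0 < p j f * x f},
                (if f.val ≠ e ∧ φ j (cf f) (cf ⟨e, he⟩) f.val = some e
                 then p j f.val * x f.val else 0)) :=
            pi_marg (fun j' (cf : {f : E // 0 < p j' f * x f} → Fin (m j')) =>
                ∏ f : {f : E // 0 < p j' f * x f},
                  (if f.val ∈ B j' (cf f) then β j' (cf f) / (p j' f.val * x f.val) else 0))
              hWsum j
              (fun cf => ∑ f : {f : E // 0 < p j f * x f},
                (if f.val ≠ e ∧ φ j (cf f) (cf ⟨e, he⟩) f.val = some e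
                 then p j f.val * x f.val else 0))
        _ = ∑ cf : {f : E // 0 < p j f * x f} → Fin (m j),
              ∑ f : {f : E // 0 < p j f * x f},
              (∏ g : {f : E // 0 < p j f * x f},
                (if g.val ∈ B j (cf g) then β j (cf g) / (p j g.val * x g.val) else 0)) *
              (if f.val ≠ e ∧ φ j (cf f) (cf ⟨e, he⟩) f.val = some e
               then p j f.val * x f.val else 0) :=
            Finset.sum_congr rfl fun cf _ => Finset.mul_sum _ _ _
        _ = ∑ f : {f : E // 0 < p j f * x f},
              ∑ cf : {f : E // 0 < p j f * x f} → Fin (m j),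
              (∏ g : {f : E // 0 < p j f * x f},
                (if g.val ∈ B j (cf g) then β j (cf g) / (p j g.val * x g.val) else 0)) *
              (if f.val ≠ e ∧ φ j (cf f) (cf ⟨e, he⟩) f.val = some e
               then p j f.val * x f.val else 0) := Finset.sum_comm
        _ = ∑ f : {f : E // 0 < p j f * x f},
              ∑ i', ∑ i, (if e ∈ B j i' then β j i' / (p j e * x e) else 0) *
                (if f.val ≠ e ∧ φ j i i' f.val = some e ∧ f.val ∈ B j i then β j i else 0) :=
            Finset.sum_congr rfl fun f _ => keyf f
        _ = ∑ i', (if e ∈ B j i' then β j i' / (p j e * x e) else 0) *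
              (∑ i, ∑ f : {f : E // 0 < p j f * x f},
                (if f.val ≠ e ∧ φ j i i' f.val = some e ∧ f.val ∈ B j i then β j i else 0)) := by
            rw [Finset.sum_comm]
            refine Finset.sum_congr rfl fun i' _ => ?_
            simp_rw [← Finset.mul_sum]
            congr 1
            exact Finset.sum_comm
        _ ≤ 1 := hfinal
    · simp only [dif_neg he, mul_zero, Finset.sum_const_zero]
      exact zero_le_one
  -- assemble the global bound
  calc ∑ c : (j : Fin d) → {f : E // 0 < p j f * x f} → Fin (m j),
        ∑ T : Finset E,
          ((∏ j : Fin d, ∏ f : {f : E // 0 < p j f * x f},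
              (if f.val ∈ B j (c j f) then β j (c j f) / (p j f.val * x f.val) else 0)) *
            ((∏ g ∈ T, x g) * ∏ g ∈ Tᶜ, (1 - x g))) *
          (∑ j ∈ C e,
            if he : 0 < p j e * x e then
              ∑ f : {f : E // 0 < p j f * x f},
                (if f.val ≠ e ∧ φ j (c j f) (c j ⟨e, he⟩) f.val = some e ∧ f.val ∈ T
                 then p j f.val else 0)
            else 0)
      = ∑ c : (j : Fin d) → {f : E // 0 < p j f * x f} → Fin (m j),
          ∑ T : Finset E, ∑ j ∈ C e,
            ((∏ j : Fin d, ∏ f : {f : E // 0 < p j f * x f},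
                (if f.val ∈ B j (c j f) then β j (c j f) / (p j f.val * x f.val) else 0)) *
              ((∏ g ∈ T, x g) * ∏ g ∈ Tᶜ, (1 - x g))) *
            (if he : 0 < p j e * x e then
              ∑ f : {f : E // 0 < p j f * x f},
                (if f.val ≠ e ∧ φ j (c j f) (c j ⟨e, he⟩) f.val = some e ∧ f.val ∈ T
                 then p j f.val else 0)
            else 0) := by
        simp_rw [Finset.mul_sum]
    _ = ∑ c : (j : Fin d) → {f : E // 0 < p j f * x f} → Fin (m j),
          ∑ j ∈ C e, ∑ T : Finset E,
            ((∏ j : Fin d, ∏ f : {f : E // 0 < p j f * x f},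
                (if f.val ∈ B j (c j f) then β j (c j f) / (p j f.val * x f.val) else 0)) *
              ((∏ g ∈ T, x g) * ∏ g ∈ Tᶜ, (1 - x g))) *
            (if he : 0 < p j e * x e then
              ∑ f : {f : E // 0 < p j f * x f},
                (if f.val ≠ e ∧ φ j (c j f) (c j ⟨e, he⟩) f.val = some e ∧ f.val ∈ T
                 then p j f.val else 0)
            else 0) := Finset.sum_congr rfl fun c _ => Finset.sum_comm
    _ = ∑ j ∈ C e,
          ∑ c : (j : Fin d) → {f : E // 0 < p j f * x f} → Fin (m j),
          ∑ T : Finset E,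
            ((∏ j : Fin d, ∏ f : {f : E // 0 < p j f * x f},
                (if f.val ∈ B j (c j f) then β j (c j f) / (p j f.val * x f.val) else 0)) *
              ((∏ g ∈ T, x g) * ∏ g ∈ Tᶜ, (1 - x g))) *
            (if he : 0 < p j e * x e then
              ∑ f : {f : E // 0 < p j f * x f},
                (if f.val ≠ e ∧ φ j (c j f) (c j ⟨e, he⟩) f.val = some e ∧ f.val ∈ T
                 then p j f.val else 0)
            else 0) := Finset.sum_comm
    _ ≤ ∑ _j ∈ C e, (1:ℝ) := Finset.sum_le_sum rowbound
    _ = ((C e).card : ℝ) := by simp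
    _ ≤ (k : ℝ) := by exact_mod_cast hCk e
end

section
/- Let (Ω, ℱ, P) be a probability space with a filtration (ℱ_t)_{t∈ℕ}, let N > 0 and γ ≥ 0 be real constants, and let (P_t)_{t∈ℕ} and (Y_t)_{t∈ℕ} be {0,1}-valued adapted processes with P_0 = 0, (P_t) non-decreasing and (Y_t) non-increasing, such that almost surely E[P_{t+1} − P_t | ℱ_t] = Y_t/N and E[Y_t − Y_{t+1} | ℱ_t] = (Y_t/N)·(1 + γ) for every t. Let τ = inf{ t : Y_t = 0 } and assume E[τ] < ∞. Then (1 + γ)·E[P_τ] = E[Y_0], i.e., E[P_τ] = E[Y_0]/(1 + γ). -/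
open MeasureTheory Filter Topology

/-- Optional stopping for the probe/block process: with `(P_t)`, `(Y_t)` as before and
`τ = inf{t : Y_t = 0}` (attained everywhere, i.e. `Y_τ = 0` and `τ ≤ t` whenever `Y_t = 0`)
having finite expectation, one gets `(1 + γ)·𝔼[P_τ] = 𝔼[Y_0]`. -/
theorem stopped_probe_block_process
    {Ω : Type*} {m0 : MeasurableSpace Ω} {μ : Measure Ω} [IsProbabilityMeasure μ]
    (ℱ : Filtration ℕ m0) (N γ : ℝ) (hN : 0 < N) (hγ : 0 ≤ γ)
    (P Y : ℕ → Ω → ℝ)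
    (hPadapted : Adapted ℱ P) (hYadapted : Adapted ℱ Y)
    (hP01 : ∀ t ω, P t ω = 0 ∨ P t ω = 1)
    (hY01 : ∀ t ω, Y t ω = 0 ∨ Y t ω = 1)
    (hP0 : ∀ ω, P 0 ω = 0)
    (hPmono : ∀ t ω, P t ω ≤ P (t + 1) ω)
    (hYmono : ∀ t ω, Y (t + 1) ω ≤ Y t ω)
    (hPstep : ∀ t, μ[fun ω => P (t + 1) ω - P t ω | ℱ t] =ᵐ[μ] fun ω => Y t ω / N)
    (hYstep : ∀ t, μ[fun ω => Y t ω - Y (t + 1) ω | ℱ t]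
        =ᵐ[μ] fun ω => (Y t ω / N) * (1 + γ))
    (τ : Ω → ℕ)
    (hτ_hit : ∀ ω, Y (τ ω) ω = 0)
    (hτ_min : ∀ ω t, Y t ω = 0 → τ ω ≤ t)
    (hτ_int : Integrable (fun ω => (τ ω : ℝ)) μ) :
    (1 + γ) * ∫ ω, P (τ ω) ω ∂μ = ∫ ω, Y 0 ω ∂μ := by
  -- basic bounds
  have hPnn : ∀ t ω, 0 ≤ P t ω := fun t ω => by rcases hP01 t ω with h | h <;> simp [h]
  have hYnn : ∀ t ω, 0 ≤ Y t ω := fun t ω => by rcases hY01 t ω with h | h <;> simp [h]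
  have hPle : ∀ t ω, P t ω ≤ 1 := fun t ω => by rcases hP01 t ω with h | h <;> simp [h]
  have hYle : ∀ t ω, Y t ω ≤ 1 := fun t ω => by rcases hY01 t ω with h | h <;> simp [h]
  have hPint : ∀ t, Integrable (P t) μ := fun t =>
    (integrable_const (1 : ℝ)).mono' ((hPadapted t).mono (ℱ.le t) le_rfl).aestronglyMeasurable
      (Eventually.of_forall fun ω => by
        rw [Real.norm_eq_abs, abs_of_nonneg (hPnn t ω)]; exact hPle t ω)
  have hYint : ∀ t, Integrable (Y t) μ := fun t =>
    (integrable_const (1 : ℝ)).mono' ((hYadapted t).mono (ℱ.le t) le_rfl).aestronglyMeasurable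
      (Eventually.of_forall fun ω => by
        rw [Real.norm_eq_abs, abs_of_nonneg (hYnn t ω)]; exact hYle t ω)
  -- the martingale
  set M : ℕ → Ω → ℝ := fun t ω => (1 + γ) * P t ω + Y t ω with hMdef
  have hMint : ∀ t, Integrable (M t) μ := fun t => ((hPint t).const_mul _).add (hYint t)
  have hMadapted : Adapted ℱ M := fun t => ((hPadapted t).const_mul _).add (hYadapted t)
  have hMkey : ∀ i, (μ[M (i + 1) | ℱ i]) =ᵐ[μ] M i := by
    intro i
    have hPd : Integrable (fun ω => P (i + 1) ω - P i ω) μ := (hPint (i + 1)).sub (hPint i)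
    have hYd : Integrable (fun ω => Y i ω - Y (i + 1) ω) μ := (hYint i).sub (hYint (i + 1))
    have hrw : M (i + 1) = fun ω =>
        M i ω + ((1 + γ) * (P (i + 1) ω - P i ω) - (Y i ω - Y (i + 1) ω)) := by
      funext ω; simp only [hMdef]; ring
    rw [hrw]
    have h1 : (μ[fun ω => M i ω +
        ((1 + γ) * (P (i + 1) ω - P i ω) - (Y i ω - Y (i + 1) ω)) | ℱ i]) =ᵐ[μ]
        (μ[M i | ℱ i]) + μ[fun ω =>
          (1 + γ) * (P (i + 1) ω - P i ω) - (Y i ω - Y (i + 1) ω) | ℱ i] :=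
      condExp_add (hMint i) ((hPd.const_mul _).sub hYd) (ℱ i)
    have h2 : (μ[fun ω =>
        (1 + γ) * (P (i + 1) ω - P i ω) - (Y i ω - Y (i + 1) ω) | ℱ i]) =ᵐ[μ]
        (μ[fun ω => (1 + γ) * (P (i + 1) ω - P i ω) | ℱ i]) -
        μ[fun ω => Y i ω - Y (i + 1) ω | ℱ i] :=
      condExp_sub (hPd.const_mul _) hYd (ℱ i)
    have h3 : (μ[fun ω => (1 + γ) * (P (i + 1) ω - P i ω) | ℱ i]) =ᵐ[μ]
        fun ω => (1 + γ) * (μ[fun ω => P (i + 1) ω - P i ω | ℱ i]) ω := by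
      simpa [smul_eq_mul, Pi.smul_def] using
        condExp_smul (μ := μ) (m := ℱ i) (1 + γ) (fun ω => P (i + 1) ω - P i ω)
    have h4 : (μ[M i | ℱ i]) = M i :=
      condExp_of_stronglyMeasurable (ℱ.le i) (hMadapted i).stronglyMeasurable (hMint i)
    filter_upwards [h1, h2, h3, hPstep i, hYstep i] with ω e1 e2 e3 e5 e6
    simp only [Pi.add_apply, Pi.sub_apply] at *
    rw [e1, e2, e3, congrFun h4 ω, e5, e6]; ring
  have hMmart : Martingale M ℱ μ := martingale_nat hMadapted.stronglyAdapted hMint fun i => (hMkey i).symm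
  -- τ is a stopping time
  have hYmono' : ∀ s t ω, s ≤ t → Y t ω ≤ Y s ω := by
    intro s t ω h
    induction t with
    | zero => simp_all
    | succ n ih =>
      rcases Nat.lt_or_ge s (n + 1) with h' | h'
      · exact (hYmono n ω).trans (ih (Nat.lt_succ_iff.mp h'))
      · have : s = n + 1 := le_antisymm h h'
        simp [this]
  have hτset : ∀ i, {ω | τ ω ≤ i} = Y i ⁻¹' {0} := by
    intro i
    ext ω
    simp only [Set.mem_setOf_eq, Set.mem_preimage, Set.mem_singleton_iff]
    constructor
    · intro h
      have := hYmono' (τ ω) i ω h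
      rw [hτ_hit ω] at this
      exact le_antisymm this (hYnn i ω)
    · exact hτ_min ω i
  have hτ : IsStoppingTime ℱ (fun ω => (WithTop.some (τ ω))) := by
    intro i
    simp only [WithTop.coe_le_coe, Nat.cast_le]
    rw [hτset i]
    exact (hYadapted i) (measurableSet_singleton 0)
  -- optional stopping at τ ∧ n
  have hstop : ∀ n : ℕ, ∫ ω, stoppedValue M (fun ω => min (WithTop.some (τ ω)) (WithTop.some n)) ω ∂μ
      = ∫ ω, M 0 ω ∂μ := by
    intro n
    have hσ : IsStoppingTime ℱ fun ω => min (WithTop.some (τ ω)) (WithTop.some n) := hτ.min_const n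
    have h0 : IsStoppingTime ℱ (fun _ : Ω => (WithTop.some (0 : ℕ))) := isStoppingTime_const ℱ 0
    have hle : (fun _ : Ω => (WithTop.some (0 : ℕ))) ≤ fun ω => min (WithTop.some (τ ω)) (WithTop.some n) :=
      fun ω => le_min (WithTop.coe_le_coe.mpr (Nat.zero_le _)) (WithTop.coe_le_coe.mpr (Nat.zero_le _))
    have hbdd : ∀ ω, min (WithTop.some (τ ω)) (WithTop.some n) ≤ WithTop.some n := fun ω => min_le_right _ _
    have A := hMmart.submartingale.expected_stoppedValue_mono h0 hσ hle hbdd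
    have B := hMmart.neg.submartingale.expected_stoppedValue_mono h0 hσ hle hbdd
    have hnegsv : ∀ (σ : Ω → WithTop ℕ), stoppedValue (-M) σ = -(stoppedValue M σ) := by
      intro σ; rfl
    rw [stoppedValue_const] at A
    rw [hnegsv, hnegsv, stoppedValue_const] at B
    simp only [Pi.neg_apply, integral_neg, neg_le_neg_iff] at B
    exact le_antisymm B A
  -- measurability of stopped values
  have hprog : ProgMeasurable ℱ M := hMadapted.stronglyAdapted.isStronglyProgressive_of_discrete
  have hmeasn : ∀ n : ℕ, AEStronglyMeasurable (stoppedValue M fun ω => min (WithTop.some (τ ω)) (WithTop.some n)) μ :=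
    fun n => ((stronglyMeasurable_stoppedValue_of_le hprog (hτ.min_const n)
      fun ω => min_le_right _ _).mono (ℱ.le n)).aestronglyMeasurable
  have hmeasτ : AEStronglyMeasurable (stoppedValue M (fun ω => (WithTop.some (τ ω)))) μ :=
    ((measurable_stoppedValue hprog hτ).mono hτ.measurableSpace_le le_rfl).aestronglyMeasurable
  -- dominated convergence
  have hbound : ∀ (k : ℕ) (ω : Ω), ‖M k ω‖ ≤ 2 + γ := by
    intro k ω
    have h1 := hPnn k ω; have h2 := hPle k ω; have h3 := hYnn k ω; have h4 := hYle k ω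
    simp only [hMdef]
    rw [Real.norm_eq_abs, abs_le]
    constructor <;> nlinarith
  have htendsto : Tendsto (fun n : ℕ => ∫ ω, stoppedValue M (fun ω => min (WithTop.some (τ ω)) (WithTop.some n)) ω ∂μ)
      atTop (𝓝 (∫ ω, stoppedValue M (fun ω => (WithTop.some (τ ω))) ω ∂μ)) := by
    refine tendsto_integral_of_dominated_convergence (fun _ => 2 + γ) hmeasn
      (integrable_const _) (fun n => Eventually.of_forall fun ω => hbound _ ω)
      (Eventually.of_forall fun ω => ?_)
    refine tendsto_atTop_of_eventually_const (i₀ := τ ω) fun n hn => ?_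
    simp only [stoppedValue, min_eq_left (WithTop.coe_le_coe.mpr hn)]
  have hlim : ∫ ω, stoppedValue M (fun ω => (WithTop.some (τ ω))) ω ∂μ = ∫ ω, M 0 ω ∂μ := by
    refine tendsto_nhds_unique htendsto ?_
    simp only [hstop]
    exact tendsto_const_nhds
  -- conclude
  have h1 : ∫ ω, stoppedValue M (fun ω => (WithTop.some (τ ω))) ω ∂μ = (1 + γ) * ∫ ω, P (τ ω) ω ∂μ := by
    rw [← integral_const_mul]
    refine integral_congr_ae (Eventually.of_forall fun ω => ?_)
    show (1 + γ) * P (τ ω) ω + Y (τ ω) ω = (1 + γ) * P (τ ω) ω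
    simp [hτ_hit ω]
  have h2 : ∫ ω, M 0 ω ∂μ = ∫ ω, Y 0 ω ∂μ := by
    refine integral_congr_ae (Eventually.of_forall fun ω => ?_)
    simp [hMdef, hP0 ω]
  rw [← h1, hlim, h2]
end

section
/- Let (Ω, ℱ, P) be a probability space with a filtration (ℱ_t)_{t∈ℕ}, let γ ≥ 0 be a real constant, let (Σ_t)_{t∈ℕ} be an adapted process of strictly positive real random variables, and let (P_t)_{t∈ℕ} and (Y_t)_{t∈ℕ} be {0,1}-valued adapted processes with P_0 = 0, (P_t) non-decreasing and (Y_t) non-increasing, such that almost surely E[P_{t+1} − P_t | ℱ_t] = Y_t/Σ_t and E[Y_t − Y_{t+1} | ℱ_t] ≤ (Y_t/Σ_t)·(1 + γ) for every t. Then the process Z_t = (1 + γ)·P_t − (1 − Y_t) is a submartingale; moreover, if τ = inf{ t : Y_t = 0 } satisfies E[τ] < ∞, then E[P_τ] ≥ E[Y_0]/(1 + γ). -/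
open MeasureTheory Filter

/-- Super/sub-martingale version: if `(Σ_t)` is an adapted strictly positive process and
`(P_t)`, `(Y_t)` are `{0,1}`-valued adapted processes with `P_0 = 0`, `(P_t)` non-decreasing,
`(Y_t)` non-increasing, `𝔼[P_{t+1} − P_t | ℱ_t] = Y_t/Σ_t` a.s. and
`𝔼[Y_t − Y_{t+1} | ℱ_t] ≤ (Y_t/Σ_t)(1 + γ)` a.s., then
`Z_t = (1 + γ)·P_t − (1 − Y_t)` is a submartingale; moreover, for
`τ = inf{t : Y_t = 0}` (attained everywhere) with finite expectation,
`𝔼[P_τ] ≥ 𝔼[Y_0]/(1 + γ)`. -/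
theorem submartingale_probe_block_process
    {Ω : Type*} {m0 : MeasurableSpace Ω} {μ : Measure Ω} [IsProbabilityMeasure μ]
    (ℱ : Filtration ℕ m0) (γ : ℝ) (hγ : 0 ≤ γ)
    (S : ℕ → Ω → ℝ) (hSadapted : Adapted ℱ S) (hSpos : ∀ t ω, 0 < S t ω)
    (P Y : ℕ → Ω → ℝ)
    (hPadapted : Adapted ℱ P) (hYadapted : Adapted ℱ Y)
    (hP01 : ∀ t ω, P t ω = 0 ∨ P t ω = 1)
    (hY01 : ∀ t ω, Y t ω = 0 ∨ Y t ω = 1)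
    (hP0 : ∀ ω, P 0 ω = 0)
    (hPmono : ∀ t ω, P t ω ≤ P (t + 1) ω)
    (hYmono : ∀ t ω, Y (t + 1) ω ≤ Y t ω)
    (hPstep : ∀ t, μ[fun ω => P (t + 1) ω - P t ω | ℱ t] =ᵐ[μ] fun ω => Y t ω / S t ω)
    (hYstep : ∀ t, ∀ᵐ ω ∂μ,
        (μ[fun ω' => Y t ω' - Y (t + 1) ω' | ℱ t]) ω ≤ (Y t ω / S t ω) * (1 + γ)) :
    Submartingale (fun t ω => (1 + γ) * P t ω - (1 - Y t ω)) ℱ μ ∧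
      ∀ τ : Ω → ℕ,
        (∀ ω, Y (τ ω) ω = 0) →
        (∀ ω t, Y t ω = 0 → τ ω ≤ t) →
        Integrable (fun ω => (τ ω : ℝ)) μ →
        (∫ ω, Y 0 ω ∂μ) / (1 + γ) ≤ ∫ ω, P (τ ω) ω ∂μ := by
  have hγ1 : (0:ℝ) < 1 + γ := by linarith
  set Z : ℕ → Ω → ℝ := fun t ω => (1 + γ) * P t ω - (1 - Y t ω) with hZdef
  -- basic integrability
  have hPint : ∀ t, Integrable (P t) μ := by
    intro t
    refine (integrable_const (1:ℝ)).mono'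
      ((hPadapted t).mono (ℱ.le t) le_rfl).aestronglyMeasurable (ae_of_all _ fun ω => ?_)
    rcases hP01 t ω with h | h <;> simp [h]
  have hYint : ∀ t, Integrable (Y t) μ := by
    intro t
    refine (integrable_const (1:ℝ)).mono'
      ((hYadapted t).mono (ℱ.le t) le_rfl).aestronglyMeasurable (ae_of_all _ fun ω => ?_)
    rcases hY01 t ω with h | h <;> simp [h]
  have hZadapted : Adapted ℱ Z := fun t =>
    ((hPadapted t).const_mul _).sub (measurable_const.sub (hYadapted t))
  have hZint : ∀ t, Integrable (Z t) μ := fun t =>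
    ((hPint t).const_mul _).sub ((integrable_const 1).sub (hYint t))
  -- the submartingale property
  have hZsub : Submartingale Z ℱ μ := by
    refine submartingale_nat hZadapted.stronglyAdapted hZint fun t => ?_
    have hdiff : (fun ω => Z (t+1) ω - Z t ω)
        = (fun ω => (1 + γ) • (P (t+1) ω - P t ω)) - (fun ω => Y t ω - Y (t+1) ω) := by
      funext ω; simp only [hZdef, smul_eq_mul, Pi.sub_apply]; ring
    have hint1 : Integrable (fun ω => (1 + γ) • (P (t+1) ω - P t ω)) μ := by
      exact ((hPint (t+1)).sub (hPint t)).smul (1 + γ)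
    have hint2 : Integrable (fun ω => Y t ω - Y (t+1) ω) μ := (hYint t).sub (hYint (t+1))
    have hc1 : μ[fun ω => Z (t+1) ω - Z t ω | ℱ t]
        =ᵐ[μ] μ[fun ω => (1 + γ) • (P (t+1) ω - P t ω) | ℱ t]
            - μ[fun ω => Y t ω - Y (t+1) ω | ℱ t] := by
      rw [hdiff]; exact condExp_sub hint1 hint2 _
    have hc2 : μ[fun ω => (1 + γ) • (P (t+1) ω - P t ω) | ℱ t]
        =ᵐ[μ] (1 + γ) • μ[fun ω => P (t+1) ω - P t ω | ℱ t] :=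
      condExp_smul (1 + γ) (fun ω => P (t+1) ω - P t ω) _
    have hge : (0 : Ω → ℝ) ≤ᵐ[μ] μ[fun ω => Z (t+1) ω - Z t ω | ℱ t] := by
      filter_upwards [hc1, hc2, (hPstep t), hYstep t] with ω h1 h2 h3 h4
      have : (μ[fun ω => Z (t+1) ω - Z t ω | ℱ t]) ω
          = (1 + γ) * (Y t ω / S t ω) - (μ[fun ω' => Y t ω' - Y (t+1) ω' | ℱ t]) ω := by
        rw [h1, Pi.sub_apply, h2, Pi.smul_apply, h3, smul_eq_mul]
      rw [this]
      simp only [Pi.zero_apply]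
      nlinarith [h4]
    -- conclude Z t ≤ᵐ μ[Z (t+1) | ℱ t]
    have hZt : μ[Z t | ℱ t] = Z t :=
      condExp_of_stronglyMeasurable (ℱ.le t) (hZadapted t).stronglyMeasurable (hZint t)
    have hadd : μ[fun ω => (Z (t+1) ω - Z t ω) + Z t ω | ℱ t]
        =ᵐ[μ] μ[fun ω => Z (t+1) ω - Z t ω | ℱ t] + μ[Z t | ℱ t] :=
      condExp_add ((hZint (t+1)).sub (hZint t)) (hZint t) _
    have heq : μ[Z (t+1) | ℱ t] =ᵐ[μ] μ[fun ω => (Z (t+1) ω - Z t ω) + Z t ω | ℱ t] := by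
      have : (fun ω => (Z (t+1) ω - Z t ω) + Z t ω) = Z (t+1) := by funext ω; ring
      rw [this]
    filter_upwards [hge, hadd, heq] with ω h1 h2 h3
    rw [h3, h2, Pi.add_apply, hZt]
    simp only [Pi.zero_apply] at h1
    linarith
  refine ⟨hZsub, fun τ hτ0 hτmin _ => ?_⟩
  -- τ is a stopping time
  have hYanti : ∀ ω, Antitone fun t => Y t ω := fun ω =>
    antitone_nat_of_succ_le fun n => hYmono n ω
  have hτle : ∀ t ω, τ ω ≤ t ↔ Y t ω = 0 := by
    intro t ω
    constructor
    · intro h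
      have h1 : Y t ω ≤ Y (τ ω) ω := hYanti ω h
      rw [hτ0 ω] at h1
      rcases hY01 t ω with h2 | h2
      · exact h2
      · rw [h2] at h1; linarith
    · exact hτmin ω t
  have hτst : IsStoppingTime ℱ (fun ω => (τ ω : WithTop ℕ)) := by
    intro t
    have : {ω | (τ ω : WithTop ℕ) ≤ t} = Y t ⁻¹' {0} := by
      ext ω; simp [hτle t ω]
    show MeasurableSet[ℱ t] {ω | (τ ω : WithTop ℕ) ≤ (t : WithTop ℕ)}; rw [this]
    exact hYadapted t (measurableSet_singleton 0)
  -- uniform bound on Z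
  have hZbd : ∀ t ω, ‖Z t ω‖ ≤ 2 + γ := by
    intro t ω
    rcases hP01 t ω with h1 | h1 <;> rcases hY01 t ω with h2 | h2 <;>
      simp only [hZdef, h1, h2, Real.norm_eq_abs] <;> rw [abs_le] <;> constructor <;> nlinarith
  have hPprog : IsStronglyProgressive ℱ P := hPadapted.stronglyAdapted.isStronglyProgressive_of_discrete
  have hZprog : IsStronglyProgressive ℱ Z := hZadapted.stronglyAdapted.isStronglyProgressive_of_discrete
  -- optional stopping for truncated stopping times
  have hstep : ∀ n : ℕ, (∫ ω, Z 0 ω ∂μ) ≤ (∫ ω, stoppedValue Z (fun ω => min (τ ω) n) ω ∂μ) := by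
    intro n
    have h0 : stoppedValue Z (fun _ => (0:ℕ)) = Z 0 := rfl
    have := hZsub.expected_stoppedValue_mono (isStoppingTime_const ℱ 0)
      (hτst.min_const n) (fun ω => zero_le) (fun ω => min_le_right _ _)
    exact this
  -- pass to the limit
  have hun : ∀ k : ℕ, WithTop.untopA ((k : ℕ) : WithTop ℕ) = k := fun k => rfl
  have hPτint : Integrable (stoppedValue P (fun ω => (τ ω : WithTop ℕ))) μ := by
    refine (integrable_const (1:ℝ)).mono'
      ((measurable_stoppedValue hPprog hτst).mono hτst.measurableSpace_le le_rfl).aestronglyMeasurable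
      (ae_of_all _ fun ω => ?_)
    rcases hP01 (τ ω) ω with h | h <;> simp [stoppedValue, hun, h]
  have hZτint : Integrable (stoppedValue Z (fun ω => (τ ω : WithTop ℕ))) μ := by
    refine (integrable_const (2 + γ)).mono'
      ((measurable_stoppedValue hZprog hτst).mono hτst.measurableSpace_le le_rfl).aestronglyMeasurable
      (ae_of_all _ fun ω => hZbd _ _)
  have htend : Tendsto (fun n : ℕ => (∫ ω, stoppedValue Z (fun ω => min (τ ω) n) ω ∂μ)) atTop
      (nhds ((∫ ω, stoppedValue Z (fun ω => (τ ω : WithTop ℕ)) ω ∂μ))) := by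
    refine tendsto_integral_of_dominated_convergence (fun _ => 2 + γ)
      (fun n => ?_) (integrable_const _) (fun n => ae_of_all _ fun ω => hZbd _ _)
      (ae_of_all _ fun ω => ?_)
    · exact ((stronglyMeasurable_stoppedValue_of_le hZprog (hτst.min_const n)
        fun ω => min_le_right _ _).mono (ℱ.le n)).aestronglyMeasurable
    · refine tendsto_const_nhds.congr' ?_
      filter_upwards [eventually_ge_atTop (τ ω)] with n hn
      have hn' : ((τ ω : ℕ) : WithTop ℕ) ≤ (n : WithTop ℕ) := by exact_mod_cast hn
      simp [stoppedValue, hun, min_eq_left hn']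
  have hmain : (∫ ω, Z 0 ω ∂μ) ≤ (∫ ω, stoppedValue Z (fun ω => (τ ω : WithTop ℕ)) ω ∂μ) :=
    ge_of_tendsto' htend hstep
  -- compute both sides
  have hZ0 : (∫ ω, Z 0 ω ∂μ) = (∫ ω, Y 0 ω ∂μ) - 1 := by
    have : Z 0 = fun ω => Y 0 ω - 1 := by
      funext ω; simp [hZdef, hP0 ω]
    rw [this, integral_sub (hYint 0) (integrable_const 1), integral_const]
    simp
  have hZτ : (∫ ω, stoppedValue Z (fun ω => (τ ω : WithTop ℕ)) ω ∂μ) = (1 + γ) * (∫ ω, P (τ ω) ω ∂μ) - 1 := by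
    have : stoppedValue Z (fun ω => (τ ω : WithTop ℕ)) = fun ω => (1 + γ) * stoppedValue P (fun ω => (τ ω : WithTop ℕ)) ω - 1 := by
      funext ω; simp [stoppedValue, hun, hZdef, hτ0 ω]
    rw [this, integral_sub (hPτint.const_mul _) (integrable_const 1), integral_const,
      integral_const_mul]
    simp [stoppedValue, hun]
  rw [hZ0, hZτ] at hmain
  rw [div_le_iff₀ hγ1]
  linarith
end

section
/- (Negative correlation bound for stochastic matching.) Let G = (V, E) be a finite graph, and let p, x : E → [0,1] satisfy Σ_{f ∈ δ(v)} p_f x_f ≤ 1 for every vertex v ∈ V, where δ(v) is the set of edges incident to v. Let (X̂_f)_{f∈E} be {0,1}-valued random variables on a common probability space with E[X̂_f] = x_f for every f, and suppose that E[X̂_e X̂_f] ≤ x_e x_f for all distinct edges e, f sharing a vertex. Then for every edge e = {u, v}, E[ Σ_{f ∈ Adj(e)} p_f X̂_f · X̂_e ] ≤ (2 − 2 p_e x_e) · x_e, where Adj(e) = (δ(u) ∪ δ(v)) ∖ {e}; equivalently, when x_e > 0, E[ Σ_{f ∈ Adj(e)} p_f X̂_f | X̂_e = 1 ] ≤ 2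 − 2 p_e x_e. -/
open Finset

lemma integrable01 {Ω : Type*} [MeasurableSpace Ω] (μ : MeasureTheory.Measure Ω)
    [MeasureTheory.IsProbabilityMeasure μ] (g : Ω → ℝ) (hm : Measurable g)
    (h01 : ∀ ω, g ω = 0 ∨ g ω = 1) : MeasureTheory.Integrable g μ := by
  refine (MeasureTheory.integrable_const (1 : ℝ)).mono' hm.aestronglyMeasurable ?_
  filter_upwards with ω
  rcases h01 ω with h | h <;> simp [h]

/-- **Negative correlation bound for stochastic matching.** Let `G = (V, E)` be a finite
graph and `p, x : E → [0,1]` with `Σ_{f ∈ δ(v)} p_f x_f ≤ 1` for every vertex `v`. Let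
`(X̂_f)` be `{0,1}`-valued random variables with `𝔼[X̂_f] = x_f` for every edge `f`, pairwise
negatively correlated on adjacent edges (`𝔼[X̂_e X̂_f] ≤ x_e x_f`). Then for every edge
`e = {u,v}`, `𝔼[ Σ_{f ∈ Adj(e)} p_f X̂_f · X̂_e ] ≤ (2 − 2 p_e x_e)·x_e`, where
`Adj(e) = (δ(u) ∪ δ(v)) ∖ {e}`. -/
theorem negative_correlation_matching_bound
    {V : Type*} [Fintype V] [DecidableEq V]
    (G : SimpleGraph V) [DecidableRel G.Adj]
    {Ω : Type*} [MeasurableSpace Ω] (μ : MeasureTheory.Measure Ω)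
    [MeasureTheory.IsProbabilityMeasure μ]
    (p x : Sym2 V → ℝ)
    (hp : ∀ f, p f ∈ Set.Icc (0 : ℝ) 1) (hx : ∀ f, x f ∈ Set.Icc (0 : ℝ) 1)
    (hdeg : ∀ v : V, ∑ f ∈ G.edgeFinset.filter (fun f => v ∈ f), p f * x f ≤ 1)
    (X : Sym2 V → Ω → ℝ)
    (hXmeas : ∀ f, Measurable (X f))
    (hX01 : ∀ f ω, X f ω = 0 ∨ X f ω = 1)
    (hXmean : ∀ f ∈ G.edgeFinset, ∫ ω, X f ω ∂μ = x f)
    (hXnegcorr : ∀ e ∈ G.edgeFinset, ∀ f ∈ G.edgeFinset, e ≠ f →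
      (∃ w : V, w ∈ e ∧ w ∈ f) → ∫ ω, X e ω * X f ω ∂μ ≤ x e * x f)
    (u v : V) (huv : G.Adj u v) :
    ∫ ω, (∑ f ∈ (G.edgeFinset.filter (fun f => u ∈ f) ∪
            G.edgeFinset.filter (fun f => v ∈ f)).erase s(u, v),
        p f * X f ω) * X s(u, v) ω ∂μ ≤
      (2 - 2 * p s(u, v) * x s(u, v)) * x s(u, v) := by
  classical
  set e : Sym2 V := s(u, v) with he_def
  have he : e ∈ G.edgeFinset := by
    rw [SimpleGraph.mem_edgeFinset, he_def]
    exact huv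
  set A : Finset (Sym2 V) := G.edgeFinset.filter (fun f => u ∈ f) with hA
  set B : Finset (Sym2 V) := G.edgeFinset.filter (fun f => v ∈ f) with hB
  set S : Finset (Sym2 V) := (A ∪ B).erase e with hS
  have hprod : ∀ f, ∀ ω, X f ω * X e ω = 0 ∨ X f ω * X e ω = 1 := by
    intro f ω
    rcases hX01 f ω with h | h <;> rcases hX01 e ω with h' | h' <;> simp [h, h']
  have hint : ∀ f, MeasureTheory.Integrable (fun ω => X f ω * X e ω) μ :=
    fun f => integrable01 μ _ ((hXmeas f).mul (hXmeas e)) (hprod f)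
  -- rewrite integrand as a sum
  have hrw : (∫ ω, (∑ f ∈ S, p f * X f ω) * X e ω ∂μ) =
      ∑ f ∈ S, p f * ∫ ω, X f ω * X e ω ∂μ := by
    have : ∀ ω, (∑ f ∈ S, p f * X f ω) * X e ω = ∑ f ∈ S, p f * (X f ω * X e ω) := by
      intro ω; rw [Finset.sum_mul]; exact Finset.sum_congr rfl fun f _ => by ring
    simp_rw [this]
    rw [MeasureTheory.integral_finset_sum]
    · exact Finset.sum_congr rfl fun f _ => MeasureTheory.integral_const_mul _ _
    · exact fun f _ => (hint f).const_mul _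
  rw [hrw]
  have hSE : S ⊆ G.edgeFinset := by
    intro f hf
    have := Finset.mem_of_mem_erase hf
    rcases Finset.mem_union.mp this with h | h
    · exact (Finset.mem_filter.mp h).1
    · exact (Finset.mem_filter.mp h).1
  have step1 : ∑ f ∈ S, p f * ∫ ω, X f ω * X e ω ∂μ ≤ ∑ f ∈ S, p f * (x f * x e) := by
    refine Finset.sum_le_sum fun f hf => ?_
    refine mul_le_mul_of_nonneg_left ?_ (hp f).1
    have hfe : f ≠ e := Finset.ne_of_mem_erase hf
    have hshare : ∃ w : V, w ∈ f ∧ w ∈ e := by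
      rcases Finset.mem_union.mp (Finset.mem_of_mem_erase hf) with h | h
      · exact ⟨u, (Finset.mem_filter.mp h).2, by simp [he_def]⟩
      · exact ⟨v, (Finset.mem_filter.mp h).2, by simp [he_def]⟩
    exact hXnegcorr f (hSE hf) e he hfe hshare
  have step2 : ∑ f ∈ S, p f * (x f * x e) = (∑ f ∈ S, p f * x f) * x e := by
    rw [Finset.sum_mul]; exact Finset.sum_congr rfl fun f _ => by ring
  have heA : e ∈ A := Finset.mem_filter.mpr ⟨he, by simp [he_def]⟩
  have heB : e ∈ B := Finset.mem_filter.mpr ⟨he, by simp [he_def]⟩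
  have hnonneg : ∀ f, 0 ≤ p f * x f := fun f => mul_nonneg (hp f).1 (hx f).1
  have hsumS : ∑ f ∈ S, p f * x f ≤ 2 - 2 * p e * x e := by
    have hsplit : S = A.erase e ∪ B.erase e := by
      rw [hS, Finset.erase_union_distrib]
    have hle : ∑ f ∈ S, p f * x f ≤
        (∑ f ∈ A.erase e, p f * x f) + ∑ f ∈ B.erase e, p f * x f := by
      rw [hsplit]
      have := Finset.sum_union_inter (s₁ := A.erase e) (s₂ := B.erase e)
        (f := fun f => p f * x f)
      have hpos : 0 ≤ ∑ f ∈ (A.erase e) ∩ (B.erase e), p f * x f :=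
        Finset.sum_nonneg fun f _ => hnonneg f
      linarith
    have hAsum : ∑ f ∈ A.erase e, p f * x f = (∑ f ∈ A, p f * x f) - p e * x e := by
      rw [Finset.sum_erase_eq_sub heA]
    have hBsum : ∑ f ∈ B.erase e, p f * x f = (∑ f ∈ B, p f * x f) - p e * x e := by
      rw [Finset.sum_erase_eq_sub heB]
    have h1 := hdeg u
    have h2 := hdeg v
    rw [← hA] at h1; rw [← hB] at h2
    linarith [hAsum, hBsum]
  calc ∑ f ∈ S, p f * ∫ ω, X f ω * X e ω ∂μ
      ≤ (∑ f ∈ S, p f * x f) * x e := by rw [← step2]; exact step1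
    _ ≤ (2 - 2 * p e * x e) * x e :=
        mul_le_mul_of_nonneg_right hsumS (hx e).1
end
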